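/- arXiv:2412.12291 — 10 statements merged into one kernel-verified Lean document; each statement's English description precedes it below -/
import Mathlib

section
/- Let P be a product probability density on bitstrings of length n, and let z, z' be two distinct bitstrings with Hamming distance D = D_H(z, z') ≥ 1. Then P(z)^{1/D} + P(z')^{1/D} ≤ 1. -/
/-!
Let `S` be the set of coordinates where `z` and `z'` differ, so that `#S = D`. Every factor of `P`
lies in `[0, 1]`, hence `P z ≤ ∏_{i ∈ S} a i` and `P z' ≤ ∏_{i ∈ S} (1 - a i)`, where `a i` is the
factor of `z` at `i`. By AM–GM the `D`-th roots of these two products are at most the means of the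
`a i` and of the `1 - a i` over `S`, and these two means add up to `1`.
-/

open Finset

lemma ite_one_sub_mem_Icc {p : ℝ} (b : Bool) (hp : p ∈ Set.Icc 0 1) :
    (if b then p else 1 - p) ∈ Set.Icc 0 1 := by
  cases b <;> simp [hp.1, hp.2]

lemma ite_add_ite_one_sub_of_ne {R : Type*} [Ring R] {b b' : Bool} (h : b ≠ b') (p : R) :
    ((if b then p else 1 - p) + if b' then p else 1 - p) = 1 := by
  cases b <;> cases b' <;> simp_all

lemma Real.prod_rpow_one_div_card_le_mean {ι : Type*} {s : Finset ι} (hs : s.Nonempty)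
    {a : ι → ℝ} (ha : ∀ i ∈ s, 0 ≤ a i) :
    (∏ i ∈ s, a i) ^ ((1 : ℝ) / #s) ≤ (∑ i ∈ s, a i) / #s := by
  have hcard : (0 : ℝ) < #s := by exact_mod_cast hs.card_pos
  simpa using Real.geom_mean_le_arith_mean s (fun _ ↦ 1) a (fun _ _ ↦ zero_le_one)
    (by simpa using hcard) ha

lemma Real.prod_rpow_one_div_card_add_prod_rpow_one_div_card_le_one {ι : Type*} {s : Finset ι}
    (hs : s.Nonempty) {a b : ι → ℝ} (ha : ∀ i ∈ s, 0 ≤ a i) (hb : ∀ i ∈ s, 0 ≤ b i)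
    (hab : ∀ i ∈ s, a i + b i = 1) :
    (∏ i ∈ s, a i) ^ ((1 : ℝ) / #s) + (∏ i ∈ s, b i) ^ ((1 : ℝ) / #s) ≤ 1 := by
  have hcard : (0 : ℝ) < #s := by exact_mod_cast hs.card_pos
  calc _ ≤ (∑ i ∈ s, a i) / #s + (∑ i ∈ s, b i) / #s :=
        add_le_add (prod_rpow_one_div_card_le_mean hs ha) (prod_rpow_one_div_card_le_mean hs hb)
    _ = 1 := by
        rw [← add_div, ← sum_add_distrib, sum_congr rfl hab, sum_const, nsmul_one]
        exact div_self hcard.ne'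

theorem rpow_hammingDist_add_rpow_hammingDist_le_one_general
    (n : ℕ) (q : Fin n → ℝ) (hq : ∀ i, 0 ≤ q i ∧ q i ≤ 1)
    (P : (Fin n → Bool) → ℝ)
    (hP : ∀ x, P x = ∏ i, if x i then q i else 1 - q i)
    (z z' : Fin n → Bool) (hD : 1 ≤ hammingDist z z') :
    P z ^ ((1 : ℝ) / (hammingDist z z' : ℝ))
      + P z' ^ ((1 : ℝ) / (hammingDist z z' : ℝ)) ≤ 1 := by
  set S : Finset (Fin n) := {i | z i ≠ z' i}
  have hS : hammingDist z z' = #S := rfl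
  have hfactor (x : Fin n → Bool) (i : Fin n) :
      (if x i then q i else 1 - q i) ∈ Set.Icc 0 1 := ite_one_sub_mem_Icc _ (hq i)
  have hP_nonneg (x : Fin n → Bool) : 0 ≤ P x := hP x ▸ prod_nonneg fun i _ ↦ (hfactor x i).1
  have hP_le (x : Fin n → Bool) : P x ≤ ∏ i ∈ S, if x i then q i else 1 - q i :=
    hP x ▸ prod_le_prod_of_subset_of_le_one (subset_univ S) (fun i _ ↦ (hfactor x i).1)
      (fun i _ _ ↦ (hfactor x i).2)
  rw [hS]
  calc _ ≤ (∏ i ∈ S, if z i then q i else 1 - q i) ^ ((1 : ℝ) / #S)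
        + (∏ i ∈ S, if z' i then q i else 1 - q i) ^ ((1 : ℝ) / #S) := by
        gcongr <;> apply_rules
    _ ≤ 1 := Real.prod_rpow_one_div_card_add_prod_rpow_one_div_card_le_one
        (card_pos.mp (hS ▸ hD)) (fun i _ ↦ (hfactor z i).1) (fun i _ ↦ (hfactor z' i).1)
        (fun i hi ↦ ite_add_ite_one_sub_of_ne (mem_filter.mp hi).2 (q i))

/-- Paper: Appendix Lemma 2.
Let `P` be a product probability density on bitstrings of length `n`
(with parameters `q i ∈ [0,1]`), and let `z, z'` be two distinct bitstrings with
Hamming distance `D = D_H(z, z') ≥ 1`. Then `P z ^ (1/D) + P z' ^ (1/D) ≤ 1`. -/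
theorem rpow_hammingDist_add_rpow_hammingDist_le_one
    (n : ℕ) (q : Fin n → ℝ) (hq : ∀ i, 0 ≤ q i ∧ q i ≤ 1)
    (P : (Fin n → Bool) → ℝ)
    (hP : ∀ x, P x = ∏ i, if x i then q i else 1 - q i)
    (z z' : Fin n → Bool) (hne : z ≠ z') (hD : 1 ≤ hammingDist z z') :
    P z ^ ((1 : ℝ) / (hammingDist z z' : ℝ))
      + P z' ^ ((1 : ℝ) / (hammingDist z z' : ℝ)) ≤ 1 :=
  rpow_hammingDist_add_rpow_hammingDist_le_one_general n q hq P hP z z' hD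
end

section
/- Let P be a product probability density on bitstrings of length n, let z be any bitstring, and let 0 ≤ r ≤ n. Set q = P(z)^{1/n}. Then the probability of the Hamming ball of radius r around z satisfies ∑_{x : D_H(x,z) ≤ r} P(x) ≥ ∑_{k=0}^{r} C(n,k) · q^{n−k} · (1 − q)^{k}, where C(n,k) denotes the binomial coefficient. -/
/-!
The number of mismatches with `z` is a sum of independent Bernoulli variables; write `p i` for
the probability that coordinate `i` matches, so that `P z = ∏ p i = c ^ n` with
`c = P z ^ (1 / n)`. For an antitone `f`, such as the indicator of `≤ r`, the expectation of
`f (#mismatches)` depends on a pair `(p i, p j)` only through `p i * p j` and `p i + p j`, and it increases with the sum when the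
product is fixed. If `p i < c < p j`, replacing the pair by `(c, p i * p j / c)` keeps the
product and lowers the sum, hence lowers the expectation, and creates one more coordinate equal
to `c`. Finitely many such moves reach the constant vector `c`, where the number of mismatches
is binomial. When `c = 0` it suffices that the expectation is monotone in each `p i`.
-/

open Finset

section

variable {ι : Type*} {s : Finset ι} {p : ι → ℝ}

theorem exists_lt_and_exists_gt_of_prod_eq_pow {c : ℝ} (hc : 0 < c) (hp : ∀ i ∈ s, 0 ≤ p i)
    (hprod : ∏ i ∈ s, p i = c ^ #s) (hne : ∃ k ∈ s, p k ≠ c) :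
    (∃ i ∈ s, p i < c) ∧ ∃ j ∈ s, c < p j := by
  obtain ⟨k, hks, hk⟩ := hne
  constructor
  · by_contra! h
    have := prod_lt_prod (fun _ _ ↦ hc) h ⟨k, hks, (h k hks).lt_of_ne' hk⟩
    rw [prod_const, hprod] at this
    exact this.false
  · by_contra! h
    have hpos : ∀ i ∈ s, 0 < p i := fun i hi ↦ (hp i hi).lt_of_ne' fun h0 ↦
      (pow_pos hc #s).ne' (hprod ▸ prod_eq_zero hi h0)
    have := prod_lt_prod hpos h ⟨k, hks, (h k hks).lt_of_ne hk⟩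
    rw [prod_const, hprod] at this
    exact this.false

end

theorem sum_range_mul_ite_le {n : ℕ} (r : ℕ) (b : ℕ → ℝ) (hb : ∀ k, n < k → b k = 0) :
    ∑ k ∈ range (n + 1), b k * (if k ≤ r then 1 else 0) = ∑ k ∈ range (r + 1), b k := by
  simp only [mul_ite, mul_one, mul_zero]
  rw [← sum_filter]
  refine sum_subset (fun k hk ↦ ?_) fun k hkr hk ↦ hb k ?_
  · simp only [mem_filter, mem_range] at hk ⊢; omega
  · simp only [mem_filter, mem_range] at hk hkr; omega

theorem antitone_ite_le (r : ℕ) : Antitone fun k : ℕ ↦ if k ≤ r then (1 : ℝ) else 0 :=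
  fun a b hab ↦ by
    dsimp only
    split_ifs <;> first | omega | norm_num

section

variable {ι : Type*} [DecidableEq ι]

/-- `𝔼[f N]`, where `N` counts the failures among independent trials `i ∈ s`, trial `i`
succeeding with probability `p i`. -/
noncomputable def expectNumFailures (s : Finset ι) (p : ι → ℝ) (f : ℕ → ℝ) : ℝ :=
  ∑ S ∈ s.powerset, f #S * ((∏ i ∈ S, (1 - p i)) * ∏ i ∈ s \ S, p i)

variable {s : Finset ι} {p p' : ι → ℝ} {f g : ℕ → ℝ}

theorem expectNumFailures_insert {a : ι} (ha : a ∉ s) (p : ι → ℝ) (f : ℕ → ℝ) :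
    expectNumFailures (insert a s) p f =
      p a * expectNumFailures s p f + (1 - p a) * expectNumFailures s p (fun k ↦ f (k + 1)) := by
  rw [expectNumFailures, sum_powerset_insert ha, expectNumFailures, expectNumFailures,
    mul_sum, mul_sum]
  congr 1 <;> refine sum_congr rfl fun S hS ↦ ?_
  · have haS : a ∉ S := fun h ↦ ha (mem_powerset.1 hS h)
    rw [insert_sdiff_of_notMem _ haS, prod_insert (fun h ↦ ha (mem_sdiff.1 h).1)]
    ring
  · have haS : a ∉ S := fun h ↦ ha (mem_powerset.1 hS h)
    rw [card_insert_of_notMem haS, prod_insert haS, insert_sdiff_insert, sdiff_insert_of_notMem ha]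
    ring

theorem expectNumFailures_congr (h : ∀ i ∈ s, p i = p' i) (f : ℕ → ℝ) :
    expectNumFailures s p f = expectNumFailures s p' f := by
  refine sum_congr rfl fun S hS ↦ ?_
  have hSs := mem_powerset.1 hS
  rw [prod_congr rfl fun i hi ↦ by rw [h i (hSs hi)],
    prod_congr rfl fun i hi ↦ h i (mem_sdiff.1 hi).1]

theorem expectNumFailures_mono_right (hp : ∀ i ∈ s, 0 ≤ p i ∧ p i ≤ 1) (hfg : f ≤ g) :
    expectNumFailures s p f ≤ expectNumFailures s p g := by
  refine sum_le_sum fun S hS ↦ mul_le_mul_of_nonneg_right (hfg _) ?_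
  have hSs := mem_powerset.1 hS
  exact mul_nonneg (prod_nonneg fun i hi ↦ sub_nonneg.2 (hp i (hSs hi)).2)
    (prod_nonneg fun i hi ↦ (hp i (mem_sdiff.1 hi).1).1)

theorem expectNumFailures_succ_le (hp : ∀ i ∈ s, 0 ≤ p i ∧ p i ≤ 1) (hf : Antitone f) :
    expectNumFailures s p (fun k ↦ f (k + 1)) ≤ expectNumFailures s p f :=
  expectNumFailures_mono_right hp fun k ↦ hf k.le_succ

theorem expectNumFailures_mono_left (hp : ∀ i ∈ s, 0 ≤ p i ∧ p i ≤ 1)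
    (hp' : ∀ i ∈ s, 0 ≤ p' i ∧ p' i ≤ 1) (hpp' : ∀ i ∈ s, p i ≤ p' i) (hf : Antitone f) :
    expectNumFailures s p f ≤ expectNumFailures s p' f := by
  induction s using Finset.induction_on generalizing f with
  | empty => rfl
  | insert a s ha ih =>
    have hs := fun i hi ↦ hp i (mem_insert_of_mem hi)
    have hs' := fun i hi ↦ hp' i (mem_insert_of_mem hi)
    have hss := fun i hi ↦ hpp' i (mem_insert_of_mem hi)
    have h0 := ih hs hs' hss hf
    have h1 := ih hs hs' hss fun _ _ h ↦ hf (Nat.succ_le_succ h)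
    have h2 := expectNumFailures_succ_le hs' hf
    have hpa := hp a (mem_insert_self a s)
    have hpa' := hpp' a (mem_insert_self a s)
    rw [expectNumFailures_insert ha, expectNumFailures_insert ha]
    linarith [mul_le_mul_of_nonneg_left h0 hpa.1, mul_le_mul_of_nonneg_left h1 (sub_nonneg.2 hpa.2),
      mul_le_mul_of_nonneg_right hpa' (sub_nonneg.2 h2)]

theorem expectNumFailures_le_of_mul_eq_of_add_le {i j : ι} (hi : i ∈ s) (hj : j ∈ s)
    (hij : i ≠ j) (hpp' : ∀ k ∈ s, k ≠ i → k ≠ j → p k = p' k)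
    (hp' : ∀ k ∈ s, 0 ≤ p' k ∧ p' k ≤ 1) (hmul : p i * p j = p' i * p' j)
    (hadd : p i + p j ≤ p' i + p' j) (hf : Antitone f) :
    expectNumFailures s p f ≤ expectNumFailures s p' f := by
  set t := (s.erase i).erase j
  have hjt : j ∉ t := notMem_erase j _
  have hit : i ∉ insert j t := by simp [t, hij]
  have hs : s = insert i (insert j t) := by
    rw [insert_erase (mem_erase.2 ⟨hij.symm, hj⟩), insert_erase hi]
  have hts : t ⊆ s := (erase_subset _ _).trans (erase_subset _ _)
  have hpt : ∀ k ∈ t, p k = p' k := fun k hk ↦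
    hpp' k (hts hk) (ne_of_mem_erase (mem_of_mem_erase hk)) (ne_of_mem_erase hk)
  have hE : expectNumFailures t p' (fun k ↦ f (k + 1 + 1)) ≤
      expectNumFailures t p' (fun k ↦ f (k + 1)) :=
    expectNumFailures_succ_le (fun k hk ↦ hp' k (hts hk)) fun _ _ h ↦ hf (by omega)
  rw [hs]
  -- As a function of the pair `(p i, p j)` the expectation is
  -- `E₂ + (p i + p j) * (E₁ - E₂) + p i * p j * (E₀ - 2 * E₁ + E₂)`, and `E₂ ≤ E₁`.
  simp only [expectNumFailures_insert hit, expectNumFailures_insert hjt,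
    expectNumFailures_congr hpt]
  set E₀ := expectNumFailures t p' f
  set E₁ := expectNumFailures t p' (fun k ↦ f (k + 1))
  set E₂ := expectNumFailures t p' (fun k ↦ f (k + 1 + 1))
  linear_combination (E₀ - 2 * E₁ + E₂) * hmul + mul_le_mul_of_nonneg_right hadd (sub_nonneg.2 hE)

theorem exists_smoothing {c : ℝ} (hc0 : 0 < c) (hc1 : c ≤ 1) (hp : ∀ i ∈ s, 0 ≤ p i ∧ p i ≤ 1)
    (hprod : ∏ i ∈ s, p i = c ^ #s) (hne : ∃ k ∈ s, p k ≠ c) (hf : Antitone f) :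
    ∃ p' : ι → ℝ, (∀ i ∈ s, 0 ≤ p' i ∧ p' i ≤ 1) ∧ ∏ i ∈ s, p' i = c ^ #s ∧
      #{k ∈ s | p' k ≠ c} < #{k ∈ s | p k ≠ c} ∧
      expectNumFailures s p' f ≤ expectNumFailures s p f := by
  obtain ⟨⟨i, hi, hpi⟩, ⟨j, hj, hpj⟩⟩ :=
    exists_lt_and_exists_gt_of_prod_eq_pow hc0 (fun i hi ↦ (hp i hi).1) hprod hne
  have hij : i ≠ j := by rintro rfl; linarith
  set b := p i * p j / c
  set p' := Function.update (Function.update p i c) j b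
  have hp'i : p' i = c := by simp [p', hij]
  have hp'j : p' j = b := by simp [p']
  have hp'k : ∀ k, k ≠ i → k ≠ j → p' k = p k := fun k hki hkj ↦ by simp [p', hki, hkj]
  have hcb : c * b = p i * p j := mul_div_cancel₀ _ hc0.ne'
  have hmul : p' i * p' j = p i * p j := by rw [hp'i, hp'j, hcb]
  have hb0 : 0 ≤ b := div_nonneg (mul_nonneg (hp i hi).1 (hp j hj).1) hc0.le
  have hb1 : b ≤ 1 := by
    rw [div_le_one hc0]; nlinarith [(hp i hi).1, (hp j hj).2]
  refine ⟨p', fun k hk ↦ ?_, ?_, ?_, ?_⟩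
  · by_cases hki : k = i
    · subst hki; exact hp'i ▸ ⟨hc0.le, hc1⟩
    by_cases hkj : k = j
    · subst hkj; exact hp'j ▸ ⟨hb0, hb1⟩
    exact hp'k k hki hkj ▸ hp k hk
  · have hj' : j ∈ s.erase i := mem_erase.2 ⟨hij.symm, hj⟩
    rw [← hprod, ← mul_prod_erase s _ hi, ← mul_prod_erase _ _ hj', ← mul_prod_erase s _ hi,
      ← mul_prod_erase _ _ hj', ← mul_assoc, ← mul_assoc, hmul]
    congr 1
    exact prod_congr rfl fun k hk ↦ hp'k k (ne_of_mem_erase (mem_of_mem_erase hk))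
      (ne_of_mem_erase hk)
  · have hsub : {k ∈ s | p' k ≠ c} ⊆ {k ∈ s | p k ≠ c}.erase i := by
      intro k hk
      rw [mem_filter] at hk
      have hki : k ≠ i := by rintro rfl; exact hk.2 hp'i
      refine mem_erase.2 ⟨hki, mem_filter.2 ⟨hk.1, ?_⟩⟩
      by_cases hkj : k = j
      · subst hkj; exact hpj.ne'
      · exact hp'k k hki hkj ▸ hk.2
    exact (card_le_card hsub).trans_lt (card_erase_lt_of_mem (mem_filter.2 ⟨hi, hpi.ne⟩))
  · refine expectNumFailures_le_of_mul_eq_of_add_le hi hj hij (fun k _ ↦ hp'k k) hp hmul ?_ hf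
    rw [hp'i, hp'j]
    refine le_of_mul_le_mul_left ?_ hc0
    nlinarith [mul_nonneg (sub_nonneg.2 hpi.le) (sub_nonneg.2 hpj.le)]

theorem expectNumFailures_const_le_of_pos {c : ℝ} (hc0 : 0 < c) (hc1 : c ≤ 1) (hf : Antitone f)
    (hp : ∀ i ∈ s, 0 ≤ p i ∧ p i ≤ 1) (hprod : ∏ i ∈ s, p i = c ^ #s) :
    expectNumFailures s (fun _ ↦ c) f ≤ expectNumFailures s p f := by
  induction h : #{k ∈ s | p k ≠ c} using Nat.strong_induction_on generalizing p with
  | _ m ih =>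
    by_cases hne : ∃ k ∈ s, p k ≠ c
    · obtain ⟨p', hp', hprod', hlt, hle⟩ := exists_smoothing hc0 hc1 hp hprod hne hf
      exact (ih _ (h ▸ hlt) hp' hprod' rfl).trans hle
    · push Not at hne
      exact (expectNumFailures_congr (fun i hi ↦ (hne i hi).symm) f).le

theorem expectNumFailures_const_le {c : ℝ} (hc0 : 0 ≤ c) (hc1 : c ≤ 1) (hf : Antitone f)
    (hp : ∀ i ∈ s, 0 ≤ p i ∧ p i ≤ 1) (hprod : ∏ i ∈ s, p i = c ^ #s) :
    expectNumFailures s (fun _ ↦ c) f ≤ expectNumFailures s p f := by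
  rcases hc0.eq_or_lt with rfl | hc
  · exact expectNumFailures_mono_left (fun _ _ ↦ ⟨le_rfl, zero_le_one⟩) hp
      (fun i hi ↦ (hp i hi).1) hf
  · exact expectNumFailures_const_le_of_pos hc hc1 hf hp hprod

theorem expectNumFailures_const (s : Finset ι) (c : ℝ) (f : ℕ → ℝ) :
    expectNumFailures s (fun _ ↦ c) f =
      ∑ k ∈ range (#s + 1), (#s).choose k * c ^ (#s - k) * (1 - c) ^ k * f k := by
  rw [expectNumFailures]
  have hterm : ∀ S ∈ s.powerset, f #S * ((∏ _i ∈ S, (1 - c)) * ∏ _i ∈ s \ S, c) =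
      f #S * ((1 - c) ^ #S * c ^ (#s - #S)) := fun S hS ↦ by
    rw [prod_const, prod_const, card_sdiff_of_subset (mem_powerset.1 hS)]
  rw [sum_congr rfl hterm, sum_powerset_apply_card (fun k ↦ f k * ((1 - c) ^ k * c ^ (#s - k)))]
  exact sum_congr rfl fun k _ ↦ by rw [nsmul_eq_mul]; ring

theorem expectNumFailures_const_ite_le (s : Finset ι) (c : ℝ) (r : ℕ) :
    expectNumFailures s (fun _ ↦ c) (fun k ↦ if k ≤ r then 1 else 0) =
      ∑ k ∈ range (r + 1), (#s).choose k * c ^ (#s - k) * (1 - c) ^ k := by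
  rw [expectNumFailures_const, sum_range_mul_ite_le r _ fun k hk ↦ by
    rw [Nat.choose_eq_zero_of_lt hk, Nat.cast_zero, zero_mul, zero_mul]]

theorem sum_hammingDist_eq_expectNumFailures [Fintype ι] (q : ι → ℝ) (z : ι → Bool)
    (f : ℕ → ℝ) :
    ∑ x : ι → Bool, f (hammingDist x z) * ∏ i, (if x i then q i else 1 - q i) =
      expectNumFailures univ (fun i ↦ if z i then q i else 1 - q i) f := by
  refine sum_nbij' (fun x ↦ ({i | x i ≠ z i} : Finset ι)) (fun S i ↦ if i ∈ S then !z i else z i)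
    (fun _ _ ↦ mem_powerset.2 (subset_univ _)) (fun _ _ ↦ mem_univ _) ?_ ?_ ?_
  · intro x _
    funext i
    cases hx : x i <;> cases hz : z i <;> simp [hx, hz]
  · intro S _
    ext i
    by_cases h : i ∈ S <;> simp [h]
  · intro x _
    rw [← prod_filter_mul_prod_filter_not univ (fun i ↦ x i ≠ z i), ← compl_eq_univ_sdiff,
      compl_filter]
    congr 2 <;> refine prod_congr rfl fun i hi ↦ ?_ <;>
      cases hx : x i <;> cases hz : z i <;> simp [hx, hz] at hi ⊢

end

theorem hammingBall_prob_ge_binomial_sum_general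
    (n r : ℕ) (q : Fin n → ℝ) (hq : ∀ i, 0 ≤ q i ∧ q i ≤ 1)
    (P : (Fin n → Bool) → ℝ)
    (hP : ∀ x, P x = ∏ i, if x i then q i else 1 - q i)
    (z : Fin n → Bool) :
    ∑ k ∈ Finset.range (r + 1),
        (n.choose k : ℝ) * (P z ^ ((1 : ℝ) / n)) ^ (n - k)
          * (1 - P z ^ ((1 : ℝ) / n)) ^ k
      ≤ ∑ x ∈ Finset.univ.filter (fun x => hammingDist x z ≤ r), P x := by
  set p : Fin n → ℝ := fun i ↦ if z i then q i else 1 - q i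
  have hp : ∀ i ∈ univ, 0 ≤ p i ∧ p i ≤ 1 := fun i _ ↦ by
    by_cases h : z i <;> simp [p, h, hq i]
  have hPz : P z = ∏ i, p i := hP z
  have hPz0 : 0 ≤ P z := hPz ▸ prod_nonneg fun i hi ↦ (hp i hi).1
  have hcn : ∏ i, p i = (P z ^ ((1 : ℝ) / n)) ^ n := by
    rcases Nat.eq_zero_or_pos n with rfl | hn
    · simp
    · rw [← hPz, one_div, Real.rpow_inv_natCast_pow hPz0 hn.ne']
  set c := P z ^ ((1 : ℝ) / n)
  have hc0 : 0 ≤ c := Real.rpow_nonneg hPz0 _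
  have hc1 : c ≤ 1 := Real.rpow_le_one hPz0 (hPz ▸ prod_le_one (fun i hi ↦ (hp i hi).1)
    fun i hi ↦ (hp i hi).2) (by positivity)
  have hball : ∑ x ∈ univ.filter (fun x ↦ hammingDist x z ≤ r), P x =
      expectNumFailures univ p (fun k ↦ if k ≤ r then 1 else 0) := by
    rw [← sum_hammingDist_eq_expectNumFailures, sum_filter]
    simp [hP]
  have hbinom := expectNumFailures_const_ite_le (univ : Finset (Fin n)) c r
  rw [card_univ, Fintype.card_fin] at hbinom
  rw [hball, ← hbinom]
  exact expectNumFailures_const_le hc0 hc1 (antitone_ite_le r) hp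
    (by rwa [card_univ, Fintype.card_fin])

/-- Paper: Appendix Lemma 3.
Let `P` be a product probability density on bitstrings of length `n`, `z` any
bitstring, and `0 ≤ r ≤ n`. With `q = P z ^ (1/n)`, the probability of the
Hamming ball of radius `r` around `z` satisfies
`∑_{x : D_H(x,z) ≤ r} P x ≥ ∑_{k=0}^{r} C(n,k) q^(n-k) (1-q)^k`. -/
theorem hammingBall_prob_ge_binomial_sum
    (n r : ℕ) (hr : r ≤ n) (q : Fin n → ℝ) (hq : ∀ i, 0 ≤ q i ∧ q i ≤ 1)
    (P : (Fin n → Bool) → ℝ)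
    (hP : ∀ x, P x = ∏ i, if x i then q i else 1 - q i)
    (z : Fin n → Bool) :
    ∑ k ∈ Finset.range (r + 1),
        (n.choose k : ℝ) * (P z ^ ((1 : ℝ) / n)) ^ (n - k)
          * (1 - P z ^ ((1 : ℝ) / n)) ^ k
      ≤ ∑ x ∈ Finset.univ.filter (fun x => hammingDist x z ≤ r), P x :=
  hammingBall_prob_ge_binomial_sum_general n r q hq P hP z
end

section
/- Let P be a product probability density on bitstrings of length m, let 0 ≤ d ≤ m, and let z be a bitstring such that P(z) ≥ P(¬z) > 0, where ¬z is the bitwise complement of z. Then the probability of the Hamming sphere of radius d around ¬z satisfies ∑_{x : D_H(x,¬z) = d} P(x) ≥ C(m,d) · P(¬z)^{1 − d/m} · P(z)^{d/m}; in particular it is at least C(m,d) · P(¬z). -/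
lemma card_filter_mem_powersetCard {m d : ℕ} (hd : 1 ≤ d) (i : Fin m) :
    (((Finset.powersetCard d (Finset.univ : Finset (Fin m)))).filter fun S => i ∈ S).card
      = (m-1).choose (d-1) := by
  classical
  rw [show (m-1).choose (d-1) = (Finset.powersetCard (d-1) (Finset.univ.erase i)).card by
    rw [Finset.card_powersetCard, Finset.card_erase_of_mem (Finset.mem_univ i), Finset.card_univ,
      Fintype.card_fin]]
  apply Finset.card_nbij' (fun S => S.erase i) (fun T => insert i T)
  · intro S hS
    simp only [Finset.mem_coe, Finset.mem_filter, Finset.mem_powersetCard_univ] at hS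
    rw [Finset.mem_coe, Finset.mem_powersetCard]
    constructor
    · intro x hx
      simp only [Finset.mem_erase] at hx ⊢
      exact ⟨hx.1, Finset.mem_univ x⟩
    · rw [Finset.card_erase_of_mem hS.2, hS.1]
  · intro T hT
    rw [Finset.mem_coe, Finset.mem_powersetCard] at hT
    have hiT : i ∉ T := fun h => by
      have := hT.1 h; simp at this
    simp only [Finset.mem_coe, Finset.mem_filter, Finset.mem_powersetCard_univ]
    refine ⟨?_, Finset.mem_insert_self i T⟩
    rw [Finset.card_insert_of_notMem hiT, hT.2]
    omega
  · intro S hS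
    simp only [Finset.mem_coe, Finset.mem_filter] at hS
    exact Finset.insert_erase hS.2
  · intro T hT
    rw [Finset.mem_coe, Finset.mem_powersetCard] at hT
    have hiT : i ∉ T := fun h => by have := hT.1 h; simp at this
    exact Finset.erase_insert hiT

/-- Paper: Appendix Lemma 4.
Let `P` be a product probability density on bitstrings of length `m`, let
`0 ≤ d ≤ m`, and let `z` be a bitstring with `P z ≥ P (¬z) > 0` where `¬z` is the
bitwise complement. Then the probability of the Hamming sphere of radius `d`
around `¬z` satisfies
`∑_{x : D_H(x,¬z) = d} P x ≥ C(m,d) · P(¬z)^(1 - d/m) · P(z)^(d/m)`,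
and in particular it is at least `C(m,d) · P(¬z)`. -/
theorem hammingSphere_prob_ge_choose_mul
    (m d : ℕ) (hd : d ≤ m) (q : Fin m → ℝ) (hq : ∀ i, 0 ≤ q i ∧ q i ≤ 1)
    (P : (Fin m → Bool) → ℝ)
    (hP : ∀ x, P x = ∏ i, if x i then q i else 1 - q i)
    (z : Fin m → Bool)
    (hpos : 0 < P (fun i => !(z i)))
    (hle : P (fun i => !(z i)) ≤ P z) :
    (m.choose d : ℝ) * P (fun i => !(z i)) ^ (1 - (d : ℝ) / m) * P z ^ ((d : ℝ) / m)
        ≤ ∑ x ∈ Finset.univ.filter (fun x => hammingDist x (fun i => !(z i)) = d), P x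
      ∧ (m.choose d : ℝ) * P (fun i => !(z i))
        ≤ ∑ x ∈ Finset.univ.filter (fun x => hammingDist x (fun i => !(z i)) = d), P x := by
  classical
  set w : Fin m → Bool := fun i => !(z i) with hwdef
  have hwk : ∀ k, w k = !(z k) := fun k => rfl
  set a : Fin m → ℝ := fun i => if z i then q i else 1 - q i with hadef
  set b : Fin m → ℝ := fun i => if w i then q i else 1 - q i with hbdef
  have hPz : P z = ∏ i, a i := hP z
  have hPw : P w = ∏ i, b i := hP w
  have ha0 : ∀ i, 0 ≤ a i := by
    intro i; simp only [hadef]; split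
    · exact (hq i).1
    · linarith [(hq i).2]
  have hb0 : ∀ i, 0 ≤ b i := by
    intro i; simp only [hbdef]; split
    · exact (hq i).1
    · linarith [(hq i).2]
  have hbpos : ∀ i, 0 < b i := by
    intro i
    rcases lt_or_eq_of_le (hb0 i) with h | h
    · exact h
    · exfalso
      rw [hPw, Finset.prod_eq_zero (Finset.mem_univ i) h.symm] at hpos
      exact lt_irrefl 0 hpos
  set r : Fin m → ℝ := fun i => a i / b i with hrdef
  have hr0 : ∀ i, 0 ≤ r i := fun i => div_nonneg (ha0 i) (hb0 i)
  have hab : ∀ i, a i = r i * b i :=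
    fun i => (div_mul_cancel₀ (a i) (hbpos i).ne').symm
  have hPzw : P z = (∏ i, r i) * P w := by
    rw [hPz, hPw, ← Finset.prod_mul_distrib]
    exact Finset.prod_congr rfl fun i _ => hab i
  have hprodr0 : 0 ≤ ∏ i, r i := Finset.prod_nonneg fun i _ => hr0 i
  have hprodr1 : 1 ≤ ∏ i, r i := by
    rw [hPzw] at hle
    nlinarith
  have hzw : ∀ k, z k ≠ w k := by
    intro k; rw [hwk]; cases z k <;> decide
  have hforce : ∀ k (x : Bool), x ≠ w k → x = z k := by
    intro k x hx
    rw [hwk] at hx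
    revert hx; cases z k <;> cases x <;> decide
  -- value of P on the point determined by a subset S
  have hPphi : ∀ S : Finset (Fin m), P (fun k => if k ∈ S then z k else w k)
      = P w * ∏ i ∈ S, r i := by
    intro S
    rw [hP]
    have h1 : ∀ k : Fin m, (if (if k ∈ S then z k else w k) then q k else 1 - q k)
        = if k ∈ S then a k else b k := by
      intro k
      by_cases hk : k ∈ S <;> simp [hk, hadef, hbdef]
    rw [Finset.prod_congr rfl (fun k _ => h1 k), Finset.prod_ite]
    have h2 : Finset.univ.filter (fun k => k ∈ S) = S := Finset.filter_univ_mem S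
    have h3 : Finset.univ.filter (fun k => k ∉ S) = Sᶜ := by
      ext k; simp
    rw [h2, h3]
    have h4 : ∏ k ∈ S, a k = (∏ k ∈ S, r k) * ∏ k ∈ S, b k := by
      rw [← Finset.prod_mul_distrib]
      exact Finset.prod_congr rfl fun k _ => hab k
    rw [h4, mul_assoc, Finset.prod_mul_prod_compl, ← hPw, mul_comm]
  have hfilS : ∀ S : Finset (Fin m),
      (Finset.univ.filter fun k => (if k ∈ S then z k else w k) ≠ w k) = S := by
    intro S
    ext k
    simp only [Finset.mem_filter, Finset.mem_univ, true_and]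
    by_cases hk : k ∈ S
    · simp only [if_pos hk, hk, iff_true]
      exact hzw k
    · simp [hk]
  -- sum over the sphere equals sum over subsets
  have hsum : ∑ S ∈ Finset.powersetCard d (Finset.univ : Finset (Fin m)),
      P w * ∏ i ∈ S, r i
      = ∑ x ∈ Finset.univ.filter (fun x => hammingDist x w = d), P x := by
    apply Finset.sum_nbij' (fun S => fun k => if k ∈ S then z k else w k)
      (fun x => Finset.univ.filter fun k => x k ≠ w k)
    · intro S hS
      rw [Finset.mem_powersetCard_univ] at hS
      simp only [Finset.mem_filter, Finset.mem_univ, true_and]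
      show (Finset.univ.filter fun k => (if k ∈ S then z k else w k) ≠ w k).card = d
      rw [hfilS S, hS]
    · intro x hx
      simp only [Finset.mem_filter, Finset.mem_univ, true_and] at hx
      rw [Finset.mem_powersetCard_univ]
      exact hx
    · intro S hS
      exact hfilS S
    · intro x hx
      funext k
      by_cases hk : x k = w k
      · simp [hk]
      · simp only [Finset.mem_filter, Finset.mem_univ, true_and, hk, if_pos, not_false_iff]
        rw [if_pos]
        · exact (hforce k (x k) hk).symm
        · simpa using hk
    · intro S hS
      exact (hPphi S).symm
  rcases Nat.eq_zero_or_pos d with hd0 | hd1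
  · -- d = 0
    subst hd0
    have hfil : Finset.univ.filter (fun x => hammingDist x w = 0) = {w} := by
      ext x; simp [hammingDist_eq_zero]
    rw [hfil, Finset.sum_singleton]
    simp only [Nat.choose_zero_right, Nat.cast_one, one_mul, Nat.cast_zero, zero_div,
      Real.rpow_zero, mul_one, sub_zero, Real.rpow_one]
    exact ⟨le_refl _, le_refl _⟩
  · -- d ≥ 1, so m ≥ 1
    have hm1 : 1 ≤ m := le_trans hd1 hd
    set C : ℕ := m.choose d with hCdef
    have hCpos : 0 < C := Nat.choose_pos hd
    have hCR : (0:ℝ) < C := by exact_mod_cast hCpos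
    set t : ℝ := (d : ℝ) / m with htdef
    have hmR : (0:ℝ) < m := by exact_mod_cast hm1
    have ht0 : 0 ≤ t := div_nonneg (Nat.cast_nonneg d) hmR.le
    have ht1 : t ≤ 1 := by
      rw [htdef, div_le_one hmR]
      exact_mod_cast hd
    -- AM-GM
    have hAM := Real.geom_mean_le_arith_mean_weighted
      (Finset.powersetCard d (Finset.univ : Finset (Fin m)))
      (fun _ => (C:ℝ)⁻¹) (fun S => ∏ i ∈ S, r i)
      (fun i _ => by positivity)
      (by
        rw [Finset.sum_const, Finset.card_powersetCard, Finset.card_univ, Fintype.card_fin,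
          nsmul_eq_mul, ← hCdef, mul_inv_cancel₀ (ne_of_gt hCR)])
      (fun S _ => Finset.prod_nonneg fun i _ => hr0 i)
    -- the choose identity
    have hid : m * ((m-1).choose (d-1)) = C * d := by
      have h := Nat.add_one_mul_choose_eq (m-1) (d-1)
      simpa only [Nat.succ_eq_add_one, Nat.sub_add_cancel hm1, Nat.sub_add_cancel hd1] using h
    have hexp : ((m-1).choose (d-1) : ℝ) * (C:ℝ)⁻¹ = t := by
      rw [htdef, ← div_eq_mul_inv, div_eq_div_iff hCR.ne' hmR.ne']
      have : ((m:ℝ)) * ((m-1).choose (d-1) : ℝ) = (C:ℝ) * d := by exact_mod_cast hid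
      linarith
    -- compute the geometric mean
    have hgeom : ∏ S ∈ Finset.powersetCard d (Finset.univ : Finset (Fin m)),
        (∏ i ∈ S, r i) ^ ((C:ℝ)⁻¹) = (∏ i, r i) ^ t := by
      rw [Real.finset_prod_rpow _ _ (fun S _ => Finset.prod_nonneg fun i _ => hr0 i)]
      have hswap : ∏ S ∈ Finset.powersetCard d (Finset.univ : Finset (Fin m)), ∏ i ∈ S, r i
          = ∏ i : Fin m, (r i) ^ ((m-1).choose (d-1)) := by
        rw [Finset.prod_comm' (t' := Finset.univ)
          (s' := fun i => (Finset.powersetCard d (Finset.univ : Finset (Fin m))).filter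
            fun S => i ∈ S) (by intro x y; simp [Finset.mem_filter, and_comm])]
        refine Finset.prod_congr rfl fun i _ => ?_
        rw [Finset.prod_const, card_filter_mem_powersetCard hd1 i]
      rw [hswap, Finset.prod_pow, ← Real.rpow_natCast (∏ i, r i) ((m-1).choose (d-1)),
        ← Real.rpow_mul hprodr0, hexp]
    -- put AM-GM together
    have hkey : (C:ℝ) * (∏ i, r i) ^ t
        ≤ ∑ S ∈ Finset.powersetCard d (Finset.univ : Finset (Fin m)), ∏ i ∈ S, r i := by
      simp only [hgeom] at hAM
      rw [← Finset.mul_sum] at hAM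
      calc (C:ℝ) * (∏ i, r i) ^ t
          ≤ (C:ℝ) * ((C:ℝ)⁻¹ * ∑ S ∈ Finset.powersetCard d (Finset.univ : Finset (Fin m)),
              ∏ i ∈ S, r i) := by
            apply mul_le_mul_of_nonneg_left _ hCR.le
            exact hAM
        _ = _ := by
            rw [← mul_assoc, mul_inv_cancel₀ (ne_of_gt hCR), one_mul]
    -- rewrite goal LHS
    have hLHS : (C : ℝ) * P w ^ (1 - t) * P z ^ t = P w * ((C:ℝ) * (∏ i, r i) ^ t) := by
      rw [hPzw, Real.mul_rpow hprodr0 hpos.le,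
        show (C:ℝ) * P w ^ (1 - t) * ((∏ i, r i) ^ t * P w ^ t)
          = (P w ^ (1 - t) * P w ^ t) * ((C:ℝ) * (∏ i, r i) ^ t) by ring,
        ← Real.rpow_add hpos, sub_add_cancel, Real.rpow_one]
    have hmain : (C : ℝ) * P w ^ (1 - t) * P z ^ t
        ≤ ∑ x ∈ Finset.univ.filter (fun x => hammingDist x w = d), P x := by
      rw [← hsum, hLHS, ← Finset.mul_sum]
      exact mul_le_mul_of_nonneg_left hkey hpos.le
    refine ⟨hmain, le_trans ?_ hmain⟩
    -- second bound
    have h1r : (1:ℝ) ≤ (∏ i, r i) ^ t := by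
      calc (1:ℝ) = 1 ^ t := (Real.one_rpow t).symm
        _ ≤ (∏ i, r i) ^ t := Real.rpow_le_rpow zero_le_one hprodr1 ht0
    rw [hLHS]
    calc (C:ℝ) * P w = P w * ((C:ℝ) * 1) := by ring
      _ ≤ P w * ((C:ℝ) * (∏ i, r i) ^ t) := by
          apply mul_le_mul_of_nonneg_left _ hpos.le
          exact mul_le_mul_of_nonneg_left h1r hCR.le
end

section
/- Let P be a product probability density on bitstrings of length n, and let z, z' be bitstrings with P(z) ≥ P(z') and Hamming distance D = D_H(z, z') ≥ 1. Then for every integer d with 0 ≤ d < D, the probability of the Hamming ball of radius d around z' satisfies ∑_{x : D_H(x,z') ≤ d} P(x) ≥ ∑_{k=0}^{d} C(D,k) · P(z)^{k/D} · P(z')^{1 − k/D}, and in particular ∑_{x : D_H(x,z') ≤ d} P(x) ≥ P(z') · ∑_{k=0}^{d} C(D,k). -/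
open Finset

private lemma count_mem_powersetCard' {ι : Type*} [DecidableEq ι] {S : Finset ι} {i : ι}
    (hi : i ∈ S) (m : ℕ) :
    ((powersetCard (m+1) S).filter (fun T => i ∈ T)).card = (S.card - 1).choose m := by
  have h : ((powersetCard (m+1) S).filter (fun T => i ∈ T)).card
      = (powersetCard m (S.erase i)).card := by
    apply card_bij (fun T _ => T.erase i)
    · intro T hT
      simp only [mem_filter, mem_powersetCard] at hT
      obtain ⟨⟨hsub, hcard⟩, hiT⟩ := hT
      rw [mem_powersetCard]
      exact ⟨erase_subset_erase _ hsub, by rw [card_erase_of_mem hiT, hcard]; rfl⟩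
    · intro T hT T' hT' h
      simp only [mem_filter] at hT hT'
      rw [← insert_erase hT.2, h, insert_erase hT'.2]
    · intro U hU
      rw [mem_powersetCard] at hU
      have hiU : i ∉ U := fun h => (mem_erase.1 (hU.1 h)).1 rfl
      refine ⟨insert i U, ?_, ?_⟩
      · simp only [mem_filter, mem_powersetCard]
        refine ⟨⟨?_, ?_⟩, mem_insert_self _ _⟩
        · intro x hx
          rcases mem_insert.1 hx with rfl | hx
          · exact hi
          · exact mem_of_mem_erase (hU.1 hx)
        · rw [card_insert_of_notMem hiU, hU.2]
      · rw [erase_insert hiU]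
  rw [h, card_powersetCard, card_erase_of_mem hi]

private lemma count_not_mem_powersetCard' {ι : Type*} [DecidableEq ι] (S : Finset ι) (i : ι)
    (k : ℕ) :
    (powersetCard k S).filter (fun T => i ∉ T) = powersetCard k (S.erase i) := by
  ext T
  simp only [mem_filter, mem_powersetCard, subset_erase]
  tauto

private lemma key_amgm {ι : Type*} [DecidableEq ι] (S : Finset ι) (a b : ι → ℝ)
    (ha : ∀ i ∈ S, 0 < a i) (hb : ∀ i ∈ S, 0 < b i) (k : ℕ) (hk1 : 1 ≤ k) (hk : k ≤ S.card) :
    (S.card.choose k : ℝ) * (∏ i ∈ S, a i) ^ ((k : ℝ) / (S.card : ℝ))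
        * (∏ i ∈ S, b i) ^ (1 - (k : ℝ) / (S.card : ℝ))
      ≤ ∑ T ∈ powersetCard k S, ∏ i ∈ S, (if i ∈ T then a i else b i) := by
  set D := S.card with hD
  set M := D.choose k with hM
  have hDpos : 0 < D := le_trans hk1 hk
  have hMpos : 0 < M := Nat.choose_pos hk
  have hMne : (M : ℝ) ≠ 0 := Nat.cast_ne_zero.2 hMpos.ne'
  have hDne : (D : ℝ) ≠ 0 := Nat.cast_ne_zero.2 hDpos.ne'
  set A := ∏ i ∈ S, a i with hA
  set B := ∏ i ∈ S, b i with hB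
  have hApos : 0 < A := prod_pos ha
  have hBpos : 0 < B := prod_pos hb
  have hvpos : ∀ T ∈ powersetCard k S, 0 < ∏ i ∈ S, (if i ∈ T then a i else b i) := by
    intro T _
    refine prod_pos fun i hi => ?_
    by_cases h : i ∈ T <;> simp [h, ha i hi, hb i hi]
  have amgm := Real.geom_mean_le_arith_mean_weighted (powersetCard k S)
      (fun _ => (M : ℝ)⁻¹) (fun T => ∏ i ∈ S, (if i ∈ T then a i else b i))
      (fun _ _ => by positivity)
      (by rw [sum_const, card_powersetCard, ← hD, ← hM, nsmul_eq_mul, mul_inv_cancel₀ hMne])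
      (fun T hT => (hvpos T hT).le)
  set c1 := (D - 1).choose (k - 1) with hc1
  set c2 := (D - 1).choose k with hc2
  have hcount1 : ∀ i ∈ S, ((powersetCard k S).filter (fun T => i ∈ T)).card = c1 := by
    intro i hi
    obtain ⟨m, rfl⟩ : ∃ m, k = m + 1 := ⟨k - 1, (Nat.succ_pred_eq_of_pos hk1).symm⟩
    rw [count_mem_powersetCard' hi m, ← hD]; simp [hc1]
  have hcount2 : ∀ i ∈ S, ((powersetCard k S).filter (fun T => i ∉ T)).card = c2 := by
    intro i hi
    rw [count_not_mem_powersetCard', card_powersetCard, card_erase_of_mem hi]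
  have hprod : ∏ T ∈ powersetCard k S, ∏ i ∈ S, (if i ∈ T then a i else b i)
      = A ^ c1 * B ^ c2 := by
    rw [prod_comm]
    have hi : ∀ i ∈ S, (∏ T ∈ powersetCard k S, (if i ∈ T then a i else b i))
        = a i ^ c1 * b i ^ c2 := by
      intro i hi
      rw [prod_ite (fun _ => a i) (fun _ => b i), prod_const, prod_const,
        hcount1 i hi, hcount2 i hi]
    rw [prod_congr rfl hi, prod_mul_distrib, prod_pow, prod_pow]
  have hid1 : c1 * D = k * M := by
    obtain ⟨m, rfl⟩ : ∃ m, k = m + 1 := ⟨k - 1, (Nat.succ_pred_eq_of_pos hk1).symm⟩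
    obtain ⟨e, he⟩ : ∃ e, D = e + 1 := ⟨D - 1, (Nat.succ_pred_eq_of_pos hDpos).symm⟩
    have h := Nat.add_one_mul_choose_eq e m
    simp only [hc1, hM, he, Nat.add_sub_cancel]
    calc e.choose m * (e + 1) = (e + 1) * e.choose m := mul_comm _ _
      _ = (e + 1).choose (m + 1) * (m + 1) := h
      _ = (m + 1) * (e + 1).choose (m + 1) := mul_comm _ _
  have hsum : c1 + c2 = M := by
    obtain ⟨i, hi⟩ := card_pos.1 hDpos
    rw [← hcount1 i hi, ← hcount2 i hi,
      card_filter_add_card_filter_not, card_powersetCard]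
  have e1 : (c1 : ℝ) * (M : ℝ)⁻¹ = (k : ℝ) / (D : ℝ) := by
    have h : (c1 : ℝ) * D = k * M := by exact_mod_cast hid1
    field_simp
    linarith
  have e2 : (c2 : ℝ) * (M : ℝ)⁻¹ = 1 - (k : ℝ) / (D : ℝ) := by
    have hs : (c1 : ℝ) + c2 = M := by exact_mod_cast hsum
    rw [← e1]
    field_simp
    linarith
  rw [Real.finset_prod_rpow _ _ (fun T hT => (hvpos T hT).le), hprod,
    Real.mul_rpow (pow_nonneg hApos.le c1) (pow_nonneg hBpos.le c2),
    ← Real.rpow_natCast A c1, ← Real.rpow_natCast B c2,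
    ← Real.rpow_mul hApos.le, ← Real.rpow_mul hBpos.le, e1, e2, ← mul_sum] at amgm
  rw [mul_assoc]
  calc (M : ℝ) * (A ^ ((k : ℝ) / (D : ℝ)) * B ^ (1 - (k : ℝ) / (D : ℝ)))
      ≤ (M : ℝ) * ((M : ℝ)⁻¹ * ∑ T ∈ powersetCard k S, ∏ i ∈ S, (if i ∈ T then a i else b i)) :=
        mul_le_mul_of_nonneg_left amgm (Nat.cast_nonneg _)
    _ = _ := by field_simp

/-- Paper: Appendix Lemma 5, 'prob ball tight'.
Let `P` be a product probability density on bitstrings of length `n`, and let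
`z, z'` be bitstrings with `P z ≥ P z'` and Hamming distance `D = D_H(z,z') ≥ 1`.
Then for every `0 ≤ d < D` the probability of the Hamming ball of radius `d`
around `z'` satisfies
`∑_{x : D_H(x,z') ≤ d} P x ≥ ∑_{k=0}^{d} C(D,k) · P(z)^(k/D) · P(z')^(1 - k/D)`,
and in particular it is at least `P z' · ∑_{k=0}^{d} C(D,k)`. -/
theorem hammingBall_prob_tight
    (n d : ℕ) (q : Fin n → ℝ) (hq : ∀ i, 0 ≤ q i ∧ q i ≤ 1)
    (P : (Fin n → Bool) → ℝ)
    (hP : ∀ x, P x = ∏ i, if x i then q i else 1 - q i)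
    (z z' : Fin n → Bool)
    (hle : P z' ≤ P z)
    (hD : 1 ≤ hammingDist z z')
    (hd : d < hammingDist z z') :
    (∑ k ∈ Finset.range (d + 1),
        ((hammingDist z z').choose k : ℝ)
          * P z ^ ((k : ℝ) / (hammingDist z z' : ℝ))
          * P z' ^ (1 - (k : ℝ) / (hammingDist z z' : ℝ)))
        ≤ ∑ x ∈ Finset.univ.filter (fun x => hammingDist x z' ≤ d), P x
      ∧ P z' * (∑ k ∈ Finset.range (d + 1), ((hammingDist z z').choose k : ℝ))
        ≤ ∑ x ∈ Finset.univ.filter (fun x => hammingDist x z' ≤ d), P x := by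
  classical
  set S : Finset (Fin n) := univ.filter (fun i => z i ≠ z' i) with hS
  have hDS : hammingDist z z' = S.card := rfl
  set D := S.card with hDdef
  rw [hDS] at hD hd ⊢
  have hDpos : 0 < D := hD
  have hDne : (D : ℝ) ≠ 0 := Nat.cast_ne_zero.2 hDpos.ne'
  set a : Fin n → ℝ := fun i => if z i then q i else 1 - q i with hadef
  set b : Fin n → ℝ := fun i => if z' i then q i else 1 - q i with hbdef
  have ha0 : ∀ i, 0 ≤ a i := fun i => by
    by_cases h : z i <;> simp [hadef, h, (hq i).1, sub_nonneg.2 (hq i).2]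
  have hb0 : ∀ i, 0 ≤ b i := fun i => by
    by_cases h : z' i <;> simp [hbdef, h, (hq i).1, sub_nonneg.2 (hq i).2]
  have hPnonneg : ∀ x, 0 ≤ P x := fun x => by
    rw [hP x]
    exact prod_nonneg fun i _ => by
      by_cases h : x i <;> simp [h, (hq i).1, sub_nonneg.2 (hq i).2]
  set C0 : ℝ := ∏ i ∈ univ \ S, b i with hC0
  have hC0nonneg : 0 ≤ C0 := prod_nonneg fun i _ => hb0 i
  have hab : ∀ i ∈ univ \ S, a i = b i := by
    intro i hi
    have : z i = z' i := by
      simp only [hS, mem_sdiff, mem_filter, mem_univ, true_and, not_not] at hi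
      exact hi
    simp [hadef, hbdef, this]
  have hPz : P z = C0 * ∏ i ∈ S, a i := by
    rw [hP z, ← prod_sdiff (subset_univ S)]
    congr 1
    exact prod_congr rfl fun i hi => hab i hi
  have hPz' : P z' = C0 * ∏ i ∈ S, b i := by
    rw [hP z', ← prod_sdiff (subset_univ S)]
  -- the flip map
  set F : Finset (Fin n) → (Fin n → Bool) := fun T i => if i ∈ T then z i else z' i with hF
  have hFdist : ∀ T ∈ S.powerset, hammingDist (F T) z' = T.card := by
    intro T hT
    rw [mem_powerset] at hT
    have : (univ.filter fun i => F T i ≠ z' i) = T := by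
      ext i
      simp only [mem_filter, mem_univ, true_and, hF]
      constructor
      · intro h
        by_contra hiT
        simp [hiT] at h
      · intro hiT
        have hiS := hT hiT
        simp only [hS, mem_filter, mem_univ, true_and] at hiS
        simpa [hiT] using hiS
    rw [hammingDist]
    rw [show ({i | F T i ≠ z' i} : Finset (Fin n)) = univ.filter fun i => F T i ≠ z' i from rfl,
      this]
  have hPF : ∀ T ∈ S.powerset, P (F T) = C0 * ∏ i ∈ S, (if i ∈ T then a i else b i) := by
    intro T hT
    rw [mem_powerset] at hT
    rw [hP (F T)]
    have hpt : ∀ i : Fin n, (if F T i then q i else 1 - q i)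
        = (if i ∈ T then a i else b i) := by
      intro i
      by_cases h : i ∈ T <;> simp [hF, h, hadef, hbdef]
    rw [prod_congr rfl fun i _ => hpt i, ← prod_sdiff (subset_univ S)]
    congr 1
    refine prod_congr rfl fun i hi => ?_
    have hiT : i ∉ T := fun h => (mem_sdiff.1 hi).2 (hT h)
    simp [hiT]
  have hFinj : ∀ T ∈ S.powerset, ∀ T' ∈ S.powerset, F T = F T' → T = T' := by
    intro T hT T' hT' h
    rw [mem_powerset] at hT hT'
    ext i
    by_cases hiS : i ∈ S
    · have hzz : z i ≠ z' i := by
        simpa [hS] using hiS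
      have := congrFun h i
      simp only [hF] at this
      constructor
      · intro hiT
        by_contra hiT'
        simp [hiT, hiT'] at this
        exact hzz this
      · intro hiT'
        by_contra hiT
        simp [hiT, hiT'] at this
        exact hzz this.symm
    · constructor
      · intro hiT; exact absurd (hT hiT) hiS
      · intro hiT'; exact absurd (hT' hiT') hiS
  -- step 1 : ball sum dominates sum over low-card subsets
  set G := S.powerset.filter (fun T => T.card ≤ d) with hG
  have step1 : ∑ T ∈ G, P (F T) ≤ ∑ x ∈ univ.filter (fun x => hammingDist x z' ≤ d), P x := by
    rw [← sum_image (f := P) (g := F)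
      (fun T hT T' hT' h => hFinj T (mem_filter.1 hT).1 T' (mem_filter.1 hT').1 h)]
    refine sum_le_sum_of_subset_of_nonneg ?_ fun x _ _ => hPnonneg x
    intro x hx
    rw [mem_image] at hx
    obtain ⟨T, hT, rfl⟩ := hx
    rw [mem_filter] at hT
    rw [mem_filter]
    exact ⟨mem_univ _, by rw [hFdist T hT.1]; exact hT.2⟩
  -- step 2 : decompose by cardinality
  have hGeq : G = (range (d+1)).biUnion (fun k => powersetCard k S) := by
    ext T
    simp only [hG, mem_filter, mem_powerset, mem_biUnion, mem_range, mem_powersetCard,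
      Nat.lt_succ_iff]
    constructor
    · rintro ⟨h1, h2⟩; exact ⟨T.card, h2, h1, rfl⟩
    · rintro ⟨k, hk, h1, rfl⟩; exact ⟨h1, hk⟩
  have step2 : ∑ T ∈ G, P (F T) = ∑ k ∈ range (d+1), ∑ T ∈ powersetCard k S, P (F T) := by
    rw [hGeq]
    exact sum_biUnion fun x _ y _ hxy => pairwise_disjoint_powersetCard S hxy
  by_cases hPz'0 : P z' = 0
  · -- degenerate case
    have hball : 0 ≤ ∑ x ∈ univ.filter (fun x => hammingDist x z' ≤ d), P x :=
      sum_nonneg fun x _ => hPnonneg x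
    constructor
    · have : ∀ k ∈ range (d+1),
          ((D.choose k : ℝ) * P z ^ ((k : ℝ) / (D : ℝ)) * P z' ^ (1 - (k : ℝ) / (D : ℝ))) = 0 := by
        intro k hk
        rw [mem_range, Nat.lt_succ_iff] at hk
        have hex : (0:ℝ) < 1 - (k : ℝ) / (D : ℝ) := by
          rw [sub_pos, div_lt_one (by exact_mod_cast hDpos)]
          exact_mod_cast lt_of_le_of_lt hk hd
        rw [hPz'0, Real.zero_rpow hex.ne', mul_zero]
      rw [sum_congr rfl this, sum_const, smul_zero]
      exact hball
    · rw [hPz'0, zero_mul]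
      exact hball
  · -- main case
    have hPz'pos : 0 < P z' := lt_of_le_of_ne (hPnonneg z') (Ne.symm hPz'0)
    have hPzpos : 0 < P z := lt_of_lt_of_le hPz'pos hle
    have hbpos : ∀ i, 0 < b i := by
      intro i
      rcases lt_or_eq_of_le (hb0 i) with h | h
      · exact h
      · exfalso
        apply hPz'0
        rw [hP z']
        exact prod_eq_zero (mem_univ i) h.symm
    have hapos : ∀ i, 0 < a i := by
      intro i
      rcases lt_or_eq_of_le (ha0 i) with h | h
      · exact h
      · exfalso
        refine absurd (?_ : P z = 0) hPzpos.ne'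
        rw [hP z]
        exact prod_eq_zero (mem_univ i) h.symm
    have hC0pos : 0 < C0 := prod_pos fun i _ => hbpos i
    have keyk : ∀ k ∈ range (d+1),
        (D.choose k : ℝ) * P z ^ ((k : ℝ) / (D : ℝ)) * P z' ^ (1 - (k : ℝ) / (D : ℝ))
          ≤ ∑ T ∈ powersetCard k S, P (F T) := by
      intro k hk
      rw [mem_range, Nat.lt_succ_iff] at hk
      have hkD : k ≤ D := le_of_lt (lt_of_le_of_lt hk hd)
      have hsum_eq : ∑ T ∈ powersetCard k S, P (F T)
          = C0 * ∑ T ∈ powersetCard k S, ∏ i ∈ S, (if i ∈ T then a i else b i) := by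
        rw [mul_sum]
        exact sum_congr rfl fun T hT =>
          hPF T (mem_powerset.2 (mem_powersetCard.1 hT).1)
      rcases Nat.eq_zero_or_pos k with rfl | hk1
      · have hF0 : F ∅ = z' := funext fun i => by simp [hF]
        rw [powersetCard_zero, sum_singleton, hF0]
        simp only [Nat.choose_zero_right, Nat.cast_one, Nat.cast_zero, zero_div,
          Real.rpow_zero, sub_zero, Real.rpow_one, one_mul, mul_one]
        exact le_refl _
      · have key := key_amgm S a b (fun i _ => hapos i) (fun i _ => hbpos i) k hk1 hkD
        have hC0rw : C0 ^ ((k:ℝ)/(D:ℝ)) * C0 ^ (1 - (k:ℝ)/(D:ℝ)) = C0 := by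
          rw [← Real.rpow_add hC0pos,
            show (k:ℝ)/(D:ℝ) + (1 - (k:ℝ)/(D:ℝ)) = 1 by ring, Real.rpow_one]
        rw [hsum_eq, hPz, hPz',
          Real.mul_rpow hC0nonneg (prod_nonneg fun i _ => (hapos i).le),
          Real.mul_rpow hC0nonneg (prod_nonneg fun i _ => (hbpos i).le)]
        calc (D.choose k : ℝ)
              * (C0 ^ ((k:ℝ)/(D:ℝ)) * (∏ i ∈ S, a i) ^ ((k:ℝ)/(D:ℝ)))
              * (C0 ^ (1 - (k:ℝ)/(D:ℝ)) * (∏ i ∈ S, b i) ^ (1 - (k:ℝ)/(D:ℝ)))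
            = (C0 ^ ((k:ℝ)/(D:ℝ)) * C0 ^ (1 - (k:ℝ)/(D:ℝ)))
              * ((D.choose k : ℝ) * (∏ i ∈ S, a i) ^ ((k:ℝ)/(D:ℝ))
                * (∏ i ∈ S, b i) ^ (1 - (k:ℝ)/(D:ℝ))) := by ring
          _ = C0 * ((D.choose k : ℝ) * (∏ i ∈ S, a i) ^ ((k:ℝ)/(D:ℝ))
                * (∏ i ∈ S, b i) ^ (1 - (k:ℝ)/(D:ℝ))) := by rw [hC0rw]
          _ ≤ C0 * ∑ T ∈ powersetCard k S, ∏ i ∈ S, (if i ∈ T then a i else b i) :=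
              mul_le_mul_of_nonneg_left key hC0nonneg
    have first : ∑ k ∈ range (d + 1),
        (D.choose k : ℝ) * P z ^ ((k : ℝ) / (D : ℝ)) * P z' ^ (1 - (k : ℝ) / (D : ℝ))
          ≤ ∑ x ∈ univ.filter (fun x => hammingDist x z' ≤ d), P x :=
      calc ∑ k ∈ range (d + 1),
            (D.choose k : ℝ) * P z ^ ((k : ℝ) / (D : ℝ)) * P z' ^ (1 - (k : ℝ) / (D : ℝ))
          ≤ ∑ k ∈ range (d + 1), ∑ T ∈ powersetCard k S, P (F T) := sum_le_sum keyk
        _ = ∑ T ∈ G, P (F T) := step2.symm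
        _ ≤ _ := step1
    refine ⟨first, le_trans ?_ first⟩
    rw [mul_sum]
    refine sum_le_sum fun k hk => ?_
    rw [mem_range, Nat.lt_succ_iff] at hk
    have hsplit : P z' = P z' ^ ((k:ℝ)/(D:ℝ)) * P z' ^ (1 - (k:ℝ)/(D:ℝ)) := by
      rw [← Real.rpow_add hPz'pos,
        show (k:ℝ)/(D:ℝ) + (1 - (k:ℝ)/(D:ℝ)) = 1 by ring, Real.rpow_one]
    have hmono : P z' ^ ((k:ℝ)/(D:ℝ)) ≤ P z ^ ((k:ℝ)/(D:ℝ)) :=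
      Real.rpow_le_rpow hPz'pos.le hle (div_nonneg (Nat.cast_nonneg _) (Nat.cast_nonneg _))
    calc P z' * (D.choose k : ℝ)
        = (D.choose k : ℝ) * (P z' ^ ((k:ℝ)/(D:ℝ)) * P z' ^ (1 - (k:ℝ)/(D:ℝ))) := by
          rw [← hsplit]; ring
      _ ≤ (D.choose k : ℝ) * (P z ^ ((k:ℝ)/(D:ℝ)) * P z' ^ (1 - (k:ℝ)/(D:ℝ))) := by
          refine mul_le_mul_of_nonneg_left ?_ (Nat.cast_nonneg _)
          exact mul_le_mul_of_nonneg_right hmono (Real.rpow_nonneg (hPnonneg z') _)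
      _ = (D.choose k : ℝ) * P z ^ ((k:ℝ)/(D:ℝ)) * P z' ^ (1 - (k:ℝ)/(D:ℝ)) := by ring
end

section
/- Let P be a product probability density on bitstrings of length n, let m ≥ 1, and let S be a nonempty finite set of bitstrings such that any two distinct elements of S have Hamming distance at least m. Then ∑_{z ∈ S} P(z) − max_{z ∈ S} P(z) ≤ ( ∑_{ℓ=0}^{⌊(m−1)/2⌋} C(m,ℓ) )^{−1}. In other words, the total probability of all elements of S except the most likely one is at most 1 / ∑_{ℓ=0}^{⌊(m−1)/2⌋} C(m,ℓ). -/
/-!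
Let `r = ⌊(m - 1) / 2⌋`, `K = ∑_{ℓ ≤ r} C(m, ℓ)`, and call `z ∈ S` good when
`K · P(z) ≤ P(B(z, r))`, with `B(z, r)` the Hamming ball. Since `2r < m`, the balls around the
points of `S` are disjoint, so the good points carry total mass at most `1 / K`; it remains to see
that at most one point of `S` is bad. Given `z ≠ z'` in `S`, fix `m` coordinates where they differ.
For each set `A` of at most `r` of these coordinates, swapping `z` and `z'` on `A` gives
`z_A ∈ B(z, r)` and `z'_A ∈ B(z', r)` with `P(z_A) P(z'_A) = P(z) P(z')`, because `P` is a product.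
By AM-GM, `P(z_A) / P(z) + P(z'_A) / P(z') ≥ 2`, and summing over the `K` choices of `A` shows that
`z` or `z'` is good.
-/

open Finset

section Piecewise

variable {ι : Type*} {β : ι → Type*} [DecidableEq ι]

lemma injOn_piecewise (x y : ∀ i, β i) :
    Set.InjOn (fun A : Finset ι => A.piecewise y x) {A | ∀ i ∈ A, x i ≠ y i} := by
  have subset_of_eq {A B : Finset ι} (hA : ∀ i ∈ A, x i ≠ y i)
      (h : A.piecewise y x = B.piecewise y x) : A ⊆ B := fun i hiA => by
    by_contra hiB
    have hi := congr_fun h i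
    rw [piecewise_eq_of_mem _ _ _ hiA, piecewise_eq_of_notMem _ _ _ hiB] at hi
    exact hA i hiA hi.symm
  exact fun A hA B hB hAB => (subset_of_eq hA hAB).antisymm (subset_of_eq hB hAB.symm)

lemma prod_piecewise_mul_prod_piecewise [Fintype ι] {M : Type*} [CommMonoid M]
    (f : ∀ i, β i → M) (A : Finset ι) (x y : ∀ i, β i) :
    (∏ i, f i (A.piecewise y x i)) * ∏ i, f i (A.piecewise x y i) =
      (∏ i, f i (x i)) * ∏ i, f i (y i) := by
  simp only [← prod_mul_distrib]
  refine prod_congr rfl fun i _ => ?_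
  by_cases hi : i ∈ A <;> simp [hi, mul_comm]

end Piecewise

section PowersetCardLE

variable {α : Type*}

def powersetCardLE (r : ℕ) (s : Finset α) : Finset (Finset α) := {A ∈ s.powerset | #A ≤ r}

lemma mem_powersetCardLE {r : ℕ} {s A : Finset α} :
    A ∈ powersetCardLE r s ↔ A ⊆ s ∧ #A ≤ r := by
  rw [powersetCardLE, mem_filter, mem_powerset]

lemma card_powersetCardLE (r : ℕ) (s : Finset α) :
    #(powersetCardLE r s) = ∑ ℓ ∈ range (r + 1), (#s).choose ℓ := by
  rw [card_eq_sum_card_fiberwise fun A hA => mem_range_succ_iff.2 (mem_powersetCardLE.1 hA).2]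
  refine sum_congr rfl fun ℓ hℓ => ?_
  rw [← card_powersetCard, powersetCard_eq_filter, powersetCardLE, filter_filter]
  exact congr_arg card (filter_congr fun A _ =>
    ⟨And.right, fun h => ⟨h ▸ mem_range_succ_iff.1 hℓ, h⟩⟩)

end PowersetCardLE

section HammingBall

variable {ι : Type*} {β : ι → Type*} [Fintype ι] [DecidableEq ι] [∀ i, DecidableEq (β i)]

lemma hammingDist_piecewise_le (A : Finset ι) (x y : ∀ i, β i) :
    hammingDist (A.piecewise y x) x ≤ #A :=
  card_le_card fun i hi => by
    by_contra hiA
    simp [hiA] at hi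

variable [∀ i, Fintype (β i)]

def hammingBall (x : ∀ i, β i) (r : ℕ) : Finset (∀ i, β i) := {y | hammingDist y x ≤ r}

lemma mem_hammingBall {x y : ∀ i, β i} {r : ℕ} :
    y ∈ hammingBall x r ↔ hammingDist y x ≤ r := by
  simp [hammingBall]

lemma disjoint_hammingBall {x y : ∀ i, β i} {r : ℕ} (h : 2 * r < hammingDist x y) :
    Disjoint (hammingBall x r) (hammingBall y r) :=
  disjoint_left.2 fun w hx hy => by
    have := hammingDist_triangle_left x y w
    rw [mem_hammingBall] at hx hy
    omega

lemma sum_sum_hammingBall_le {f : (∀ i, β i) → ℝ} (hf : ∀ x, 0 ≤ f x)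
    {S : Finset (∀ i, β i)} {r : ℕ}
    (hS : (S : Set (∀ i, β i)).Pairwise fun x y => 2 * r < hammingDist x y) :
    ∑ x ∈ S, ∑ y ∈ hammingBall x r, f y ≤ ∑ y, f y := by
  rw [← sum_biUnion (hS.mono' fun _ _ => disjoint_hammingBall)]
  exact sum_le_univ_sum_of_nonneg hf

lemma sum_piecewise_le_sum_hammingBall {f : (∀ i, β i) → ℝ} (hf : ∀ x, 0 ≤ f x)
    {x y : ∀ i, β i} {D : Finset ι} (hD : ∀ i ∈ D, x i ≠ y i) (r : ℕ) :
    ∑ A ∈ powersetCardLE r D, f (A.piecewise y x) ≤ ∑ w ∈ hammingBall x r, f w := by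
  rw [← sum_image ((injOn_piecewise x y).mono fun A hA i hi =>
    hD i ((mem_powersetCardLE.1 hA).1 hi))]
  refine sum_le_sum_of_subset_of_nonneg (fun w hw => ?_) fun w _ _ => hf w
  obtain ⟨A, hA, rfl⟩ := mem_image.1 hw
  exact mem_hammingBall.2 ((hammingDist_piecewise_le A x y).trans (mem_powersetCardLE.1 hA).2)

end HammingBall

lemma card_mul_le_sum_or_card_mul_le_sum {α : Type*} (s : Finset α) {u v : α → ℝ} {a b : ℝ}
    (hu : ∀ i ∈ s, 0 ≤ u i) (hv : ∀ i ∈ s, 0 ≤ v i) (huv : ∀ i ∈ s, u i * v i = a * b) :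
    #s * a ≤ ∑ i ∈ s, u i ∨ #s * b ≤ ∑ i ∈ s, v i := by
  by_contra! ⟨hua, hvb⟩
  have ha : 0 < a := pos_of_mul_pos_right ((sum_nonneg hu).trans_lt hua) (Nat.cast_nonneg _)
  have hb : 0 < b := pos_of_mul_pos_right ((sum_nonneg hv).trans_lt hvb) (Nat.cast_nonneg _)
  have amgm : ∀ i ∈ s, 2 * (a * b) ≤ u i * b + v i * a := fun i hi => by
    have hprod : (u i * b) * (v i * a) = (a * b) ^ 2 := by
      linear_combination (a * b) * huv i hi
    nlinarith [sq_nonneg (u i * b - v i * a), mul_nonneg (hu i hi) hb.le,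
      mul_nonneg (hv i hi) ha.le, mul_pos ha hb]
  have := sum_le_sum amgm
  rw [sum_const, sum_add_distrib, ← sum_mul, ← sum_mul, nsmul_eq_mul] at this
  nlinarith [mul_lt_mul_of_pos_right hua hb, mul_lt_mul_of_pos_right hvb ha]

lemma sum_sub_sup'_le_sum_filter {α : Type*} {S : Finset α} (hS : S.Nonempty) {f : α → ℝ}
    (hf : ∀ x ∈ S, 0 ≤ f x) (p : α → Prop) [DecidablePred p]
    (hp : ∀ x ∈ S, ∀ y ∈ S, ¬p x → ¬p y → x = y) :
    ∑ x ∈ S, f x - S.sup' hS f ≤ ∑ x ∈ S with p x, f x := by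
  rw [← sum_filter_add_sum_filter_not S p, add_sub_assoc, add_le_iff_nonpos_right, sub_nonpos]
  obtain h | ⟨b, hb⟩ := (S.filter (¬p ·)).eq_empty_or_nonempty
  · obtain ⟨a, ha⟩ := hS
    rw [h, sum_empty]
    exact (hf a ha).trans (le_sup' f ha)
  · obtain ⟨hbS, hbp⟩ := mem_filter.1 hb
    have : S.filter (¬p ·) = {b} := eq_singleton_iff_unique_mem.2 ⟨hb, fun c hc =>
      hp c (mem_filter.1 hc).1 b hbS (mem_filter.1 hc).2 hbp⟩
    rw [this, sum_singleton]
    exact le_sup' f hbS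

section Bernoulli

variable {ι : Type*} [Fintype ι]

def bernoulliProd (q : ι → ℝ) (x : ι → Bool) : ℝ := ∏ i, if x i then q i else 1 - q i

lemma bernoulliProd_nonneg {q : ι → ℝ} (hq : ∀ i, 0 ≤ q i ∧ q i ≤ 1) (x : ι → Bool) :
    0 ≤ bernoulliProd q x :=
  prod_nonneg fun i _ => by split <;> linarith [hq i]

variable [DecidableEq ι]

lemma sum_bernoulliProd (q : ι → ℝ) : ∑ x, bernoulliProd q x = 1 := by
  simp [bernoulliProd, ← Fintype.prod_sum fun i (b : Bool) => if b then q i else 1 - q i]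

lemma bernoulliProd_piecewise_mul (q : ι → ℝ) (A : Finset ι) (x y : ι → Bool) :
    bernoulliProd q (A.piecewise y x) * bernoulliProd q (A.piecewise x y) =
      bernoulliProd q x * bernoulliProd q y :=
  prod_piecewise_mul_prod_piecewise (fun i (b : Bool) => if b then q i else 1 - q i) A x y

theorem binomial_sum_mul_le_sum_hammingBall_or {q : ι → ℝ} (hq : ∀ i, 0 ≤ q i ∧ q i ≤ 1)
    {x y : ι → Bool} {m : ℕ} (hm : m ≤ hammingDist x y) (r : ℕ) :
    (∑ ℓ ∈ range (r + 1), (m.choose ℓ : ℝ)) * bernoulliProd q x ≤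
        ∑ w ∈ hammingBall x r, bernoulliProd q w ∨
      (∑ ℓ ∈ range (r + 1), (m.choose ℓ : ℝ)) * bernoulliProd q y ≤
        ∑ w ∈ hammingBall y r, bernoulliProd q w := by
  obtain ⟨D, hDxy, rfl⟩ := exists_subset_card_eq hm
  have hD : ∀ i ∈ D, x i ≠ y i := fun i hi => (mem_filter.1 (hDxy hi)).2
  have hcard : ∑ ℓ ∈ range (r + 1), ((#D).choose ℓ : ℝ) = #(powersetCardLE r D) := by
    rw [card_powersetCardLE]
    push_cast
    rfl
  rw [hcard]
  exact (card_mul_le_sum_or_card_mul_le_sum _ (fun A _ => bernoulliProd_nonneg hq _)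
      (fun A _ => bernoulliProd_nonneg hq _) (fun A _ => bernoulliProd_piecewise_mul q A x y)).imp
    (·.trans (sum_piecewise_le_sum_hammingBall (bernoulliProd_nonneg hq) hD r))
    (·.trans (sum_piecewise_le_sum_hammingBall (bernoulliProd_nonneg hq)
      (fun i hi => (hD i hi).symm) r))

end Bernoulli

theorem sum_sub_max_le_inv_binomial_sum_general
    (n m : ℕ) (q : Fin n → ℝ) (hq : ∀ i, 0 ≤ q i ∧ q i ≤ 1)
    (P : (Fin n → Bool) → ℝ)
    (hP : ∀ x, P x = ∏ i, if x i then q i else 1 - q i)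
    (S : Finset (Fin n → Bool)) (hS : S.Nonempty)
    (hdist : ∀ z ∈ S, ∀ z' ∈ S, z ≠ z' → m ≤ hammingDist z z') :
    (∑ z ∈ S, P z) - S.sup' hS P
      ≤ (∑ ℓ ∈ Finset.range ((m - 1) / 2 + 1), (m.choose ℓ : ℝ))⁻¹ := by
  obtain rfl : P = bernoulliProd q := funext hP
  set r := (m - 1) / 2
  set K := ∑ ℓ ∈ range (r + 1), (m.choose ℓ : ℝ)
  have hK : 0 < K := sum_pos' (fun _ _ => Nat.cast_nonneg _) ⟨0, by simp⟩
  have hsep : (S : Set (Fin n → Bool)).Pairwise fun z z' => 2 * r < hammingDist z z' :=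
    fun z hz z' hz' hne => by
      have := hdist z hz z' hz' hne
      have := hammingDist_pos.2 hne
      omega
  let good z := K * bernoulliProd q z ≤ ∑ x ∈ hammingBall z r, bernoulliProd q x
  calc _ ≤ ∑ z ∈ S with good z, bernoulliProd q z :=
        sum_sub_sup'_le_sum_filter hS (fun z _ => bernoulliProd_nonneg hq z) good
          fun z hz z' hz' hbad hbad' => by
            by_contra hne
            exact (binomial_sum_mul_le_sum_hammingBall_or hq (hdist z hz z' hz' hne) r).elim
              hbad hbad'
    _ ≤ K⁻¹ := by
      rw [← one_div, le_div_iff₀' hK, mul_sum]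
      calc ∑ z ∈ S with good z, K * bernoulliProd q z
          ≤ ∑ z ∈ S with good z, ∑ x ∈ hammingBall z r, bernoulliProd q x :=
            sum_le_sum fun z hz => (mem_filter.1 hz).2
        _ ≤ ∑ x, bernoulliProd q x :=
            sum_sum_hammingBall_le (bernoulliProd_nonneg hq) (hsep.mono (filter_subset _ _))
        _ = 1 := sum_bernoulliProd q

/-- Paper: Result 2, first inequality of Eq. (14).
Let `P` be a product probability density on bitstrings of length `n`, let
`m ≥ 1`, and let `S` be a nonempty finite set of bitstrings any two distinct
elements of which have Hamming distance at least `m`. Then the total probability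
of all elements of `S` except the most likely one is at most
`1 / ∑_{ℓ=0}^{⌊(m-1)/2⌋} C(m,ℓ)`. -/
theorem sum_sub_max_le_inv_binomial_sum
    (n m : ℕ) (hm : 1 ≤ m) (q : Fin n → ℝ) (hq : ∀ i, 0 ≤ q i ∧ q i ≤ 1)
    (P : (Fin n → Bool) → ℝ)
    (hP : ∀ x, P x = ∏ i, if x i then q i else 1 - q i)
    (S : Finset (Fin n → Bool)) (hS : S.Nonempty)
    (hdist : ∀ z ∈ S, ∀ z' ∈ S, z ≠ z' → m ≤ hammingDist z z') :
    (∑ z ∈ S, P z) - S.sup' hS P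
      ≤ (∑ ℓ ∈ Finset.range ((m - 1) / 2 + 1), (m.choose ℓ : ℝ))⁻¹ :=
  sum_sub_max_le_inv_binomial_sum_general n m q hq P hP S hS hdist
end

section
/- Let P be a product probability density on bitstrings of length n, let m ≥ 1, and let S be a nonempty finite set of bitstrings such that any two distinct elements of S have Hamming distance at least m. Let g : {0,1}^n → ℝ satisfy a ≤ g(z) ≤ b for all z ∈ S, suppose W := ∑_{z∈S} P(z) > 0, and set μ := W^{−1} ∑_{z∈S} P(z) g(z). Then the weighted variance contribution of S satisfies ∑_{z∈S} P(z) (g(z) − μ)² ≤ (b − a)² · ( ∑_{ℓ=0}^{⌊(m−1)/2⌋} C(m,ℓ) )^{−1}. -/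
open Finset

lemma amgm_prod {n : ℕ} (p : Fin n → Bool → ℝ) (hp : ∀ i b, 0 ≤ p i b)
    (z z' : Fin n → Bool) (A : Finset (Fin n)) :
    2 * ((∏ i, p i (z i)) * ∏ i, p i (z' i)) ≤
      (∏ i, p i (z' i)) * (∏ i, p i (if i ∈ A then z' i else z i)) +
      (∏ i, p i (z i)) * (∏ i, p i (if i ∈ A then z i else z' i)) := by
  have h1 : ∀ (w w' : Fin n → Bool), (∏ i, p i (if i ∈ A then w i else w' i)) =
      (∏ i ∈ A, p i (w i)) * (∏ i ∈ Aᶜ, p i (w' i)) := by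
    intro w w'
    rw [← Finset.prod_mul_prod_compl A]
    congr 1
    · exact Finset.prod_congr rfl fun i hi => by simp [hi]
    · exact Finset.prod_congr rfl fun i hi => by
        simp [Finset.mem_compl.mp hi]
  have hz : (∏ i, p i (z i)) = (∏ i ∈ A, p i (z i)) * (∏ i ∈ Aᶜ, p i (z i)) :=
    (Finset.prod_mul_prod_compl A _).symm
  have hz' : (∏ i, p i (z' i)) = (∏ i ∈ A, p i (z' i)) * (∏ i ∈ Aᶜ, p i (z' i)) :=
    (Finset.prod_mul_prod_compl A _).symm
  rw [h1 z' z, h1 z z', hz, hz']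
  have hCu : (0:ℝ) ≤ ∏ i ∈ Aᶜ, p i (z i) := Finset.prod_nonneg fun i _ => hp i _
  have hCv : (0:ℝ) ≤ ∏ i ∈ Aᶜ, p i (z' i) := Finset.prod_nonneg fun i _ => hp i _
  nlinarith [mul_nonneg (mul_nonneg hCu hCv)
    (sq_nonneg ((∏ i ∈ A, p i (z i)) - ∏ i ∈ A, p i (z' i)))]

lemma count_subsets {n : ℕ} (D : Finset (Fin n)) (m r : ℕ) (hm : m ≤ D.card) :
    ∑ ℓ ∈ Finset.range (r + 1), m.choose ℓ ≤ (D.powerset.filter (fun A => A.card ≤ r)).card := by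
  classical
  have heq : D.powerset.filter (fun A => A.card ≤ r)
      = (Finset.range (r+1)).biUnion (fun ℓ => D.powersetCard ℓ) := by
    ext A
    simp only [Finset.mem_filter, Finset.mem_powerset, Finset.mem_biUnion, Finset.mem_range,
      Finset.mem_powersetCard, Nat.lt_succ_iff]
    constructor
    · rintro ⟨h1, h2⟩; exact ⟨A.card, h2, h1, rfl⟩
    · rintro ⟨ℓ, hℓ, h1, rfl⟩; exact ⟨h1, hℓ⟩
  rw [heq, Finset.card_biUnion]
  · refine Finset.sum_le_sum fun ℓ _ => ?_
    rw [Finset.card_powersetCard]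
    exact Nat.choose_le_choose ℓ hm
  · intro x _ y _ hxy
    rw [Function.onFun, Finset.disjoint_left]
    intro A hA hA'
    rw [Finset.mem_powersetCard] at hA hA'
    exact hxy (hA.2 ▸ hA'.2 ▸ rfl)

lemma sum_flip_le_ball {n : ℕ} (P : (Fin n → Bool) → ℝ) (hP0 : ∀ x, 0 ≤ P x)
    (r : ℕ) (D : Finset (Fin n)) (u v : Fin n → Bool) (huv : ∀ i ∈ D, u i ≠ v i) :
    ∑ A ∈ D.powerset.filter (fun A => A.card ≤ r), P (fun i => if i ∈ A then v i else u i)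
      ≤ ∑ y ∈ Finset.univ.filter (fun y => hammingDist y u ≤ r), P y := by
  classical
  set 𝒜 := D.powerset.filter (fun A => A.card ≤ r) with h𝒜
  set f : Finset (Fin n) → (Fin n → Bool) := fun A => (fun i => if i ∈ A then v i else u i) with hf
  have hinj : ∀ A ∈ 𝒜, ∀ A' ∈ 𝒜, f A = f A' → A = A' := by
    intro A hA A' hA' hfe
    rw [h𝒜, Finset.mem_filter, Finset.mem_powerset] at hA hA'
    ext i
    by_cases hiD : i ∈ D
    · constructor
      · intro hiA
        by_contra hiA'
        have := congrFun hfe i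
        rw [hf] at this
        simp only [hiA, hiA', if_pos, if_neg, if_true, if_false] at this
        exact (huv i hiD) this.symm
      · intro hiA'
        by_contra hiA
        have := congrFun hfe i
        rw [hf] at this
        simp only [hiA, hiA', if_neg, if_pos, if_true, if_false] at this
        exact (huv i hiD) this
    · constructor
      · intro hiA; exact absurd (hA.1 hiA) hiD
      · intro hiA'; exact absurd (hA'.1 hiA') hiD
  have hsubset : 𝒜.image f ⊆ Finset.univ.filter (fun y => hammingDist y u ≤ r) := by
    intro y hy
    rw [Finset.mem_image] at hy
    obtain ⟨A, hA, rfl⟩ := hy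
    rw [h𝒜, Finset.mem_filter, Finset.mem_powerset] at hA
    rw [Finset.mem_filter]
    refine ⟨Finset.mem_univ _, ?_⟩
    have hsub : (Finset.univ.filter fun i => f A i ≠ u i) ⊆ A := by
      intro i hi
      rw [Finset.mem_filter] at hi
      by_contra hiA
      apply hi.2
      rw [hf]; simp [hiA]
    calc hammingDist (f A) u = (Finset.univ.filter fun i => f A i ≠ u i).card := rfl
      _ ≤ A.card := Finset.card_le_card hsub
      _ ≤ r := hA.2
  calc ∑ A ∈ 𝒜, P (f A) = ∑ y ∈ 𝒜.image f, P y := (Finset.sum_image hinj).symm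
    _ ≤ _ := Finset.sum_le_sum_of_subset_of_nonneg hsubset fun y _ _ => hP0 y

lemma pair_bound {n m r : ℕ} (q : Fin n → ℝ) (hq : ∀ i, 0 ≤ q i ∧ q i ≤ 1)
    (P : (Fin n → Bool) → ℝ) (hP : ∀ x, P x = ∏ i, if x i then q i else 1 - q i)
    (hP0 : ∀ x, 0 ≤ P x)
    (z z' : Fin n → Bool) (hdist : m ≤ hammingDist z z') :
    2 * ((∑ ℓ ∈ Finset.range (r + 1), m.choose ℓ : ℕ) : ℝ) * (P z * P z') ≤
      P z' * (∑ y ∈ Finset.univ.filter (fun y => hammingDist y z ≤ r), P y) +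
      P z * (∑ y ∈ Finset.univ.filter (fun y => hammingDist y z' ≤ r), P y) := by
  classical
  set p : Fin n → Bool → ℝ := fun i b => if b then q i else 1 - q i with hp
  have hpnn : ∀ i b, 0 ≤ p i b := by
    intro i b; by_cases h : b <;> simp [hp, h] <;> linarith [(hq i).1, (hq i).2]
  have hPp : ∀ x, P x = ∏ i, p i (x i) := fun x => hP x
  set D := (Finset.univ.filter fun i => z i ≠ z' i) with hD
  have hDcard : m ≤ D.card := hdist
  set 𝒜 := D.powerset.filter (fun A => A.card ≤ r) with h𝒜
  have hkey : ∀ A ∈ 𝒜, 2 * (P z * P z') ≤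
      P z' * P (fun i => if i ∈ A then z' i else z i) +
      P z * P (fun i => if i ∈ A then z i else z' i) := by
    intro A _
    simp only [hPp]
    exact amgm_prod p hpnn z z' A
  have hsum := Finset.sum_le_sum hkey
  rw [Finset.sum_const, Finset.sum_add_distrib, ← Finset.mul_sum, ← Finset.mul_sum] at hsum
  have hcard : ((∑ ℓ ∈ Finset.range (r + 1), m.choose ℓ : ℕ) : ℝ) ≤ (𝒜.card : ℝ) := by
    exact_mod_cast count_subsets D m r hDcard
  have hb1 : ∑ A ∈ 𝒜, P (fun i => if i ∈ A then z' i else z i)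
      ≤ ∑ y ∈ Finset.univ.filter (fun y => hammingDist y z ≤ r), P y :=
    sum_flip_le_ball P hP0 r D z z' (fun i hi => (Finset.mem_filter.mp hi).2)
  have hb2 : ∑ A ∈ 𝒜, P (fun i => if i ∈ A then z i else z' i)
      ≤ ∑ y ∈ Finset.univ.filter (fun y => hammingDist y z' ≤ r), P y :=
    sum_flip_le_ball P hP0 r D z' z (fun i hi => Ne.symm (Finset.mem_filter.mp hi).2)
  have hPP : 0 ≤ P z * P z' := mul_nonneg (hP0 z) (hP0 z')
  have h1 : 2 * ((∑ ℓ ∈ Finset.range (r + 1), m.choose ℓ : ℕ) : ℝ) * (P z * P z')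
      ≤ (𝒜.card : ℝ) * (2 * (P z * P z')) := by nlinarith
  have h2 : (𝒜.card : ℝ) * (2 * (P z * P z')) = 𝒜.card • (2 * (P z * P z')) := by
    simp [nsmul_eq_mul]
  nlinarith [mul_le_mul_of_nonneg_left hb1 (hP0 z'), mul_le_mul_of_nonneg_left hb2 (hP0 z),
    h2 ▸ h1, hsum]

/-- Paper: Result 2 bound on the QFI contribution of a single DFS.
Let `P` be a product probability density on bitstrings of length `n`, `m ≥ 1`,
and `S` a nonempty finite set of bitstrings with pairwise Hamming distance at
least `m`. Let `g` satisfy `a ≤ g z ≤ b` on `S`, suppose `W = ∑_{z∈S} P z > 0`,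
and set `μ = W⁻¹ ∑_{z∈S} P z · g z`. Then
`∑_{z∈S} P z (g z − μ)² ≤ (b − a)² · (∑_{ℓ=0}^{⌊(m−1)/2⌋} C(m,ℓ))⁻¹`. -/
theorem weighted_var_dfs_le
    (n m : ℕ) (hm : 1 ≤ m) (q : Fin n → ℝ) (hq : ∀ i, 0 ≤ q i ∧ q i ≤ 1)
    (P : (Fin n → Bool) → ℝ)
    (hP : ∀ x, P x = ∏ i, if x i then q i else 1 - q i)
    (S : Finset (Fin n → Bool)) (hS : S.Nonempty)
    (hdist : ∀ z ∈ S, ∀ z' ∈ S, z ≠ z' → m ≤ hammingDist z z')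
    (g : (Fin n → Bool) → ℝ) (a b : ℝ)
    (hg : ∀ z ∈ S, a ≤ g z ∧ g z ≤ b)
    (hW : 0 < ∑ z ∈ S, P z) :
    ∑ z ∈ S, P z * (g z - (∑ z ∈ S, P z)⁻¹ * ∑ z ∈ S, P z * g z) ^ 2
      ≤ (b - a) ^ 2 * (∑ ℓ ∈ Finset.range ((m - 1) / 2 + 1), (m.choose ℓ : ℝ))⁻¹ := by
  classical
  set r := (m - 1) / 2 with hr
  set Vn : ℕ := ∑ ℓ ∈ Finset.range (r + 1), m.choose ℓ with hVn
  set W := ∑ z ∈ S, P z with hWdef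
  set B := ∑ z ∈ S, P z * g z with hB
  set A := ∑ z ∈ S, P z * g z ^ 2 with hA
  -- basics
  have hP0 : ∀ x, 0 ≤ P x := by
    intro x; rw [hP]
    refine Finset.prod_nonneg fun i _ => ?_
    by_cases h : x i <;> simp [h] <;> linarith [(hq i).1, (hq i).2]
  have hPsum : ∑ x : Fin n → Bool, P x = 1 := by
    have h := Finset.prod_univ_sum (fun _ : Fin n => (Finset.univ : Finset Bool))
        (fun i b => if b then q i else 1 - q i)
    rw [Fintype.piFinset_univ] at h
    calc ∑ x : Fin n → Bool, P x
        = ∑ x : Fin n → Bool, ∏ i, (if x i then q i else 1 - q i) :=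
          Finset.sum_congr rfl fun x _ => hP x
      _ = ∏ i : Fin n, ∑ b : Bool, (if b then q i else 1 - q i) := h.symm
      _ = 1 := by
          have h1 : ∀ i : Fin n, (∑ b : Bool, (if b then q i else 1 - q i)) = 1 := by
            intro i; rw [Fintype.sum_bool]; simp
          simp [h1]
  set Q : (Fin n → Bool) → ℝ :=
    fun z => ∑ y ∈ Finset.univ.filter (fun y => hammingDist y z ≤ r), P y with hQ
  have hQ0 : ∀ z, 0 ≤ Q z := fun z => Finset.sum_nonneg fun y _ => hP0 y
  have h2r : 2 * r + 1 ≤ m := by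
    have := Nat.div_mul_le_self (m - 1) 2
    omega
  -- disjoint balls, so ∑ Q ≤ 1
  have hQsum : ∑ z ∈ S, Q z ≤ 1 := by
    have hdis : (↑S : Set (Fin n → Bool)).PairwiseDisjoint
        (fun z => Finset.univ.filter (fun y => hammingDist y z ≤ r)) := by
      intro z hz z' hz' hne
      simp only [Function.onFun]
      rw [Finset.disjoint_left]
      intro y hy hy'
      rw [Finset.mem_filter] at hy hy'
      have htri : hammingDist z z' ≤ hammingDist z y + hammingDist y z' :=
        hammingDist_triangle _ _ _
      have hd := hdist z hz z' hz' hne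
      have hcy : hammingDist z y = hammingDist y z := hammingDist_comm _ _
      omega
    calc ∑ z ∈ S, Q z
        = ∑ y ∈ S.biUnion (fun z => Finset.univ.filter (fun y => hammingDist y z ≤ r)), P y :=
          (Finset.sum_biUnion hdis).symm
      _ ≤ ∑ y : Fin n → Bool, P y :=
          Finset.sum_le_sum_of_subset_of_nonneg (Finset.subset_univ _) fun y _ _ => hP0 y
      _ = 1 := hPsum
  -- key combinatorial bound
  set E := ∑ z ∈ S, ∑ z' ∈ S, (if z = z' then (0:ℝ) else P z * P z') with hE
  have hVE : 2 * (Vn:ℝ) * E ≤ 2 * W := by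
    have hterm : ∀ z ∈ S, ∀ z' ∈ S,
        2 * (Vn:ℝ) * (if z = z' then (0:ℝ) else P z * P z')
          ≤ (if z = z' then (0:ℝ) else P z' * Q z + P z * Q z') := by
      intro z hz z' hz' 
      by_cases h : z = z'
      · simp [h]
      · simp only [h, if_false]
        exact pair_bound q hq P hP hP0 z z' (hdist z hz z' hz' h)
    have hsum1 : 2 * (Vn:ℝ) * E
        = ∑ z ∈ S, ∑ z' ∈ S, 2 * (Vn:ℝ) * (if z = z' then (0:ℝ) else P z * P z') := by
      rw [hE, Finset.mul_sum]
      exact Finset.sum_congr rfl fun z _ => by rw [Finset.mul_sum]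
    have hsum2 : ∑ z ∈ S, ∑ z' ∈ S, 2 * (Vn:ℝ) * (if z = z' then (0:ℝ) else P z * P z')
        ≤ ∑ z ∈ S, ∑ z' ∈ S, (if z = z' then (0:ℝ) else P z' * Q z + P z * Q z') :=
      Finset.sum_le_sum fun z hz => Finset.sum_le_sum fun z' hz' => hterm z hz z' hz'
    -- split the RHS
    have hsplit : ∑ z ∈ S, ∑ z' ∈ S, (if z = z' then (0:ℝ) else P z' * Q z + P z * Q z')
        = (∑ z ∈ S, ∑ z' ∈ S, (if z = z' then (0:ℝ) else P z' * Q z))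
          + (∑ z ∈ S, ∑ z' ∈ S, (if z = z' then (0:ℝ) else P z * Q z')) := by
      rw [← Finset.sum_add_distrib]
      refine Finset.sum_congr rfl fun z _ => ?_
      rw [← Finset.sum_add_distrib]
      refine Finset.sum_congr rfl fun z' _ => ?_
      by_cases h : z = z'
      · rw [if_pos h, if_pos h, if_pos h]; ring
      · rw [if_neg h, if_neg h, if_neg h]
    have hswap : ∑ z ∈ S, ∑ z' ∈ S, (if z = z' then (0:ℝ) else P z * Q z')
        = ∑ z ∈ S, ∑ z' ∈ S, (if z = z' then (0:ℝ) else P z' * Q z) := by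
      rw [Finset.sum_comm]
      refine Finset.sum_congr rfl fun z _ => Finset.sum_congr rfl fun z' _ => ?_
      by_cases h : z = z'
      · rw [if_pos h.symm, if_pos h]
      · rw [if_neg (fun hc => h hc.symm), if_neg h]
    have hinner : ∀ z ∈ S, ∑ z' ∈ S, (if z = z' then (0:ℝ) else P z' * Q z)
        = Q z * (W - P z) := by
      intro z hz
      have h1 : ∑ z' ∈ S, (if z = z' then (0:ℝ) else P z' * Q z)
          = ∑ z' ∈ S, (P z' * Q z - (if z = z' then P z' * Q z else 0)) := by
        refine Finset.sum_congr rfl fun z' _ => ?_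
        by_cases h : z = z'
        · rw [if_pos h, if_pos h]; ring
        · rw [if_neg h, if_neg h]; ring
      rw [h1, Finset.sum_sub_distrib, Finset.sum_ite_eq, if_pos hz, ← Finset.sum_mul]
      rw [← hWdef]; ring
    have hT1 : ∑ z ∈ S, ∑ z' ∈ S, (if z = z' then (0:ℝ) else P z' * Q z) ≤ W := by
      rw [Finset.sum_congr rfl hinner]
      calc ∑ z ∈ S, Q z * (W - P z) ≤ ∑ z ∈ S, Q z * W :=
            Finset.sum_le_sum fun z _ => by
              have := hP0 z
              have := hQ0 z
              nlinarith
        _ = (∑ z ∈ S, Q z) * W := (Finset.sum_mul _ _ _).symm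
        _ ≤ 1 * W := by nlinarith [hQsum]
        _ = W := one_mul W
    calc 2 * (Vn:ℝ) * E
        ≤ ∑ z ∈ S, ∑ z' ∈ S, (if z = z' then (0:ℝ) else P z' * Q z + P z * Q z') :=
          hsum1 ▸ hsum2
      _ = _ + _ := hsplit
      _ ≤ W + W := by rw [hswap]; linarith [hT1]
      _ = 2 * W := by ring
  -- variance identities
  have hLHS : ∑ z ∈ S, P z * (g z - W⁻¹ * B) ^ 2 = A - W⁻¹ * B ^ 2 := by
    have hexp : ∀ z ∈ S, P z * (g z - W⁻¹ * B) ^ 2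
        = P z * g z ^ 2 - (2 * (W⁻¹ * B)) * (P z * g z) + (W⁻¹ * B) ^ 2 * P z := by
      intro z _; ring
    rw [Finset.sum_congr rfl hexp, Finset.sum_add_distrib, Finset.sum_sub_distrib,
      ← Finset.mul_sum, ← Finset.mul_sum, ← hA, ← hB, ← hWdef]
    have hWne : W ≠ 0 := ne_of_gt hW
    field_simp
    ring
  set Dsum := ∑ z ∈ S, ∑ z' ∈ S, P z * P z' * (g z - g z') ^ 2 with hDsumdef
  have hDsum : Dsum = 2 * W * A - 2 * B ^ 2 := by
    have hinner : ∀ z ∈ S, ∑ z' ∈ S, P z * P z' * (g z - g z') ^ 2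
        = P z * g z ^ 2 * W - 2 * (P z * g z) * B + P z * A := by
      intro z _
      have hexp : ∀ z' ∈ S, P z * P z' * (g z - g z') ^ 2
          = (P z * g z ^ 2) * P z' - (2 * (P z * g z)) * (P z' * g z') + P z * (P z' * g z' ^ 2) := by
        intro z' _; ring
      rw [Finset.sum_congr rfl hexp, Finset.sum_add_distrib, Finset.sum_sub_distrib,
        ← Finset.mul_sum, ← Finset.mul_sum, ← Finset.mul_sum, ← hA, ← hB, ← hWdef]
    rw [hDsumdef, Finset.sum_congr rfl hinner, Finset.sum_add_distrib, Finset.sum_sub_distrib,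
      ← Finset.sum_mul, ← Finset.sum_mul, ← Finset.sum_mul]
    have e1 : ∑ z ∈ S, P z * g z ^ 2 = A := rfl
    have e2 : ∑ z ∈ S, 2 * (P z * g z) = 2 * B := by rw [← Finset.mul_sum]
    have e3 : ∑ z ∈ S, P z = W := rfl
    rw [e1, e2, e3]
    ring
  -- bound the double sum by (b-a)^2 * E
  have hDE : Dsum ≤ (b - a) ^ 2 * E := by
    rw [hDsumdef, hE, Finset.mul_sum]
    refine Finset.sum_le_sum fun z hz => ?_
    rw [Finset.mul_sum]
    refine Finset.sum_le_sum fun z' hz' => ?_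
    by_cases h : z = z'
    · rw [if_pos h, h]; simp
    · rw [if_neg h]
      have h1 := hg z hz
      have h2 := hg z' hz'
      have hsq : (g z - g z') ^ 2 ≤ (b - a) ^ 2 := by nlinarith [h1.1, h1.2, h2.1, h2.2]
      have hPP : 0 ≤ P z * P z' := mul_nonneg (hP0 z) (hP0 z')
      nlinarith
  -- positivity of Vn
  have hVn1 : 1 ≤ Vn := by
    rw [hVn]
    calc 1 = m.choose 0 := (Nat.choose_zero_right m).symm
      _ ≤ ∑ ℓ ∈ Finset.range (r + 1), m.choose ℓ :=
        Finset.single_le_sum (fun i _ => Nat.zero_le _) (Finset.mem_range.mpr (Nat.succ_pos r))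
  have hVpos : (0:ℝ) < (Vn:ℝ) := by exact_mod_cast Nat.lt_of_lt_of_le Nat.zero_lt_one hVn1
  have hcast : (∑ ℓ ∈ Finset.range (r + 1), (m.choose ℓ : ℝ)) = (Vn:ℝ) := by
    rw [hVn]; push_cast; rfl
  rw [hLHS, hcast]
  have hEW : E ≤ W / (Vn:ℝ) := by
    rw [le_div_iff₀ hVpos]; nlinarith [hVE]
  have h2WLHS : 2 * W * (A - W⁻¹ * B ^ 2) = Dsum := by
    rw [hDsum]
    have hWne : W ≠ 0 := ne_of_gt hW
    field_simp
  have step : Dsum ≤ (b - a) ^ 2 * (W / (Vn:ℝ)) :=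
    le_trans hDE (mul_le_mul_of_nonneg_left hEW (sq_nonneg (b - a)))
  have hfin : 2 * W * (A - W⁻¹ * B ^ 2) ≤ 2 * W * ((b - a) ^ 2 * (Vn:ℝ)⁻¹) := by
    rw [h2WLHS]
    refine le_trans step ?_
    have hc : 0 ≤ W * ((b - a) ^ 2 * (Vn:ℝ)⁻¹) :=
      mul_nonneg hW.le (mul_nonneg (sq_nonneg (b - a)) (inv_nonneg.mpr hVpos.le))
    calc (b - a) ^ 2 * (W / (Vn:ℝ)) = W * ((b - a) ^ 2 * (Vn:ℝ)⁻¹) := by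
          rw [div_eq_mul_inv]; ring
      _ ≤ 2 * W * ((b - a) ^ 2 * (Vn:ℝ)⁻¹) := by linarith
  exact le_of_mul_le_mul_left hfin (by linarith : (0:ℝ) < 2 * W)
end

section
/- Let S be a nonempty finite set, let w : S → ℝ be nonnegative weights with W := ∑_{z∈S} w(z) > 0, and let g : S → ℝ satisfy a ≤ g(z) ≤ b for all z ∈ S. Set μ := W^{−1} ∑_{z∈S} w(z) g(z). Then ∑_{z∈S} w(z) (g(z) − μ)² ≤ (b − a)² · (W − max_{z∈S} w(z)). -/
/-- Paper: Section 4.3.1, inequality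
`4 p_κ Var_{Ψ_κ}(G_κ) ≤ c ‖G_κ‖²_Spec ∑_{i≥2} p_i`.
Let `S` be a nonempty finite set, `w : S → ℝ` nonnegative weights with
`W = ∑_{z∈S} w z > 0`, and `g : S → ℝ` with `a ≤ g z ≤ b` on `S`. With
`μ = W⁻¹ ∑_{z∈S} w z · g z`, one has
`∑_{z∈S} w z (g z − μ)² ≤ (b − a)² · (W − max_{z∈S} w z)`. -/
theorem weighted_var_le_width_sq_mul_sum_sub_max
    {ι : Type*} (S : Finset ι) (hS : S.Nonempty) (w g : ι → ℝ)
    (hw : ∀ z ∈ S, 0 ≤ w z) (hW : 0 < ∑ z ∈ S, w z) (a b : ℝ)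
    (hg : ∀ z ∈ S, a ≤ g z ∧ g z ≤ b) :
    ∑ z ∈ S, w z * (g z - (∑ z ∈ S, w z)⁻¹ * ∑ z ∈ S, w z * g z) ^ 2
      ≤ (b - a) ^ 2 * ((∑ z ∈ S, w z) - S.sup' hS w) := by
  classical
  obtain ⟨z₀, hz₀, hmax⟩ := S.exists_mem_eq_sup' hS w
  set W : ℝ := ∑ z ∈ S, w z with hWdef
  set T : ℝ := ∑ z ∈ S, w z * g z with hTdef
  set μ : ℝ := W⁻¹ * T with hμdef
  have hWne : W ≠ 0 := ne_of_gt hW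
  have hT : T = W * μ := by rw [hμdef, ← mul_assoc, mul_inv_cancel₀ hWne, one_mul]
  -- expansion identity
  have expand : ∀ c : ℝ, ∑ z ∈ S, w z * (g z - c) ^ 2
      = (∑ z ∈ S, w z * g z ^ 2) - 2 * c * T + c ^ 2 * W := by
    intro c
    have h1 : ∀ z ∈ S, w z * (g z - c) ^ 2
        = w z * g z ^ 2 - 2 * c * (w z * g z) + c ^ 2 * w z := by
      intro z _; ring
    rw [Finset.sum_congr rfl h1, Finset.sum_add_distrib, Finset.sum_sub_distrib,
      ← Finset.mul_sum, ← Finset.mul_sum]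
  -- μ minimizes
  have key : ∑ z ∈ S, w z * (g z - μ) ^ 2 ≤ ∑ z ∈ S, w z * (g z - g z₀) ^ 2 := by
    rw [expand μ, expand (g z₀), hT]
    nlinarith [sq_nonneg (μ - g z₀), hW]
  refine key.trans ?_
  -- split off z₀
  have hsplit : ∑ z ∈ S, w z * (g z - g z₀) ^ 2
      = ∑ z ∈ S.erase z₀, w z * (g z - g z₀) ^ 2 := by
    rw [← Finset.sum_erase_add _ _ hz₀]
    simp
  rw [hsplit, hmax]
  have hWsplit : W - w z₀ = ∑ z ∈ S.erase z₀, w z := by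
    rw [hWdef, ← Finset.sum_erase_add S w hz₀]; ring
  rw [hWsplit, Finset.mul_sum]
  refine Finset.sum_le_sum ?_
  intro z hz
  have hzS := Finset.mem_of_mem_erase hz
  obtain ⟨ha1, hb1⟩ := hg z hzS
  obtain ⟨ha2, hb2⟩ := hg z₀ hz₀
  have hwz := hw z hzS
  nlinarith [mul_nonneg hwz (mul_nonneg (by linarith : (0:ℝ) ≤ b - a - (g z - g z₀)) (by linarith : (0:ℝ) ≤ b - a + (g z - g z₀)))]
end

section
/- Let J be an arbitrary index type and let a : J × {1,…,n} → ℝ be given coupling coefficients. Say a nonempty subset S ⊆ {1,…,n} admits a decoherence-free sign vector if there exists w : S → {−1,1} with ∑_{i∈S} w_i a_{j,i} = 0 for all j ∈ J. Let m ≥ 1 and suppose that no subset S with 1 ≤ |S| < m admits a decoherence-free sign vector. Then any two distinct sign vectors z, z' : {1,…,n} → {−1,1} satisfying ∑_{i=1}^n z_i a_{j,i} = ∑_{i=1}^n z'_i a_{j,i} for all j ∈ J (i.e., lying in a common affine decoherence-free subspace) have Hamming distance D_H(z,z') ≥ m. -/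
/-!
If `z` and `z'` are `±1`-vectors, then `z' i = -z i` wherever they differ, so on the support `S`
of `z - z'` one has `z - z' = 2 z`. Equal couplings `∑ z i a j i = ∑ z' i a j i` therefore say
that `z` restricted to `S` is a decoherence-free sign vector on `S`; as `S` is nonempty when
`z ≠ z'`, the hypothesis forces `|S| ≥ m`.
-/

open Finset

theorem eq_neg_of_ne_of_eq_one_or_eq_neg_one {α : Type*} [One α] [InvolutiveNeg α] {x y : α}
    (hx : x = 1 ∨ x = -1) (hy : y = 1 ∨ y = -1) (hne : x ≠ y) : y = -x := by
  rcases hx with rfl | rfl <;> rcases hy with rfl | rfl <;> simp_all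

theorem two_mul_sum_filter_ne_mul_eq_sub {ι R : Type*} [Fintype ι] [CommRing R] [DecidableEq R]
    {z z' : ι → R} (hz : ∀ i, z i = 1 ∨ z i = -1) (hz' : ∀ i, z' i = 1 ∨ z' i = -1)
    (c : ι → R) :
    2 * ∑ i ∈ univ.filter (fun i => z i ≠ z' i), z i * c i =
      ∑ i, z i * c i - ∑ i, z' i * c i := by
  calc 2 * ∑ i ∈ univ.filter (fun i => z i ≠ z' i), z i * c i
      = ∑ i ∈ univ.filter (fun i => z i ≠ z' i), (z i - z' i) * c i := by
        rw [mul_sum]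
        refine sum_congr rfl fun i hi => ?_
        rw [eq_neg_of_ne_of_eq_one_or_eq_neg_one (hz i) (hz' i) (mem_filter.mp hi).2]
        ring
    _ = ∑ i, (z i - z' i) * c i :=
        sum_filter_of_ne fun i _ h => sub_ne_zero.mp (left_ne_zero_of_mul h)
    _ = ∑ i, z i * c i - ∑ i, z' i * c i := by simp only [sub_mul, sum_sub_distrib]

open Classical in
theorem hammingDist_ge_of_common_affine_dfs_general
    (n m : ℕ) {J : Type*} (a : J → Fin n → ℝ)
    (hmin : ∀ S : Finset (Fin n), 1 ≤ S.card → S.card < m →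
      ¬ ∃ w : Fin n → ℝ, (∀ i ∈ S, w i = 1 ∨ w i = -1) ∧
        ∀ j, ∑ i ∈ S, w i * a j i = 0)
    (z z' : Fin n → ℝ)
    (hz : ∀ i, z i = 1 ∨ z i = -1) (hz' : ∀ i, z' i = 1 ∨ z' i = -1)
    (hne : z ≠ z')
    (hcoup : ∀ j, ∑ i, z i * a j i = ∑ i, z' i * a j i) :
    m ≤ (Finset.univ.filter (fun i => z i ≠ z' i)).card := by
  by_contra! hlt
  have hpos : 0 < (univ.filter fun i => z i ≠ z' i).card := by
    obtain ⟨i, hi⟩ := Function.ne_iff.mp hne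
    exact card_pos.mpr ⟨i, mem_filter.mpr ⟨mem_univ i, hi⟩⟩
  refine hmin _ hpos hlt ⟨z, fun i _ => hz i, fun j => ?_⟩
  have h := two_mul_sum_filter_ne_mul_eq_sub hz hz' (a j)
  rw [hcoup j, sub_self] at h
  exact (mul_eq_zero.mp h).resolve_left two_ne_zero

open Classical in
/-- Paper: Lemma 1 of Section 4.3.1.
Let `a : J × Fin n → ℝ` be coupling coefficients. A nonempty subset
`S ⊆ {1,…,n}` admits a decoherence-free sign vector if there is `w` with values
`±1` on `S` and `∑_{i∈S} w i · a j i = 0` for all `j`. If no subset of size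
`1 ≤ |S| < m` admits a decoherence-free sign vector, then any two distinct sign
vectors `z, z'` lying in a common affine decoherence-free subspace (i.e. with
`∑_i z i · a j i = ∑_i z' i · a j i` for all `j`) have Hamming distance ≥ `m`. -/
theorem hammingDist_ge_of_common_affine_dfs
    (n m : ℕ) (hm : 1 ≤ m) {J : Type*} (a : J → Fin n → ℝ)
    (hmin : ∀ S : Finset (Fin n), 1 ≤ S.card → S.card < m →
      ¬ ∃ w : Fin n → ℝ, (∀ i ∈ S, w i = 1 ∨ w i = -1) ∧
        ∀ j, ∑ i ∈ S, w i * a j i = 0)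
    (z z' : Fin n → ℝ)
    (hz : ∀ i, z i = 1 ∨ z i = -1) (hz' : ∀ i, z' i = 1 ∨ z' i = -1)
    (hne : z ≠ z')
    (hcoup : ∀ j, ∑ i, z i * a j i = ∑ i, z' i * a j i) :
    m ≤ (Finset.univ.filter (fun i => z i ≠ z' i)).card :=
  hammingDist_ge_of_common_affine_dfs_general n m a hmin z z' hz hz' hne hcoup
end

section
/- Let γ ∈ [0, π] and α, φ ∈ ℝ. Then (1/(2π)) · ∫_0^{2π} Π_γ(s + φ) · cos(α − s) ds = (2/π) · sin(γ) · cos(α + φ), where Π_γ is the 2π-periodic rectangular wave. -/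
open Classical in
/-- The 2π-periodic rectangular wave: `Π_γ t = 1` if `t` lies in `(-γ, γ)`
modulo `2π`, and `−1` otherwise. -/
noncomputable def rectWave (γ t : ℝ) : ℝ :=
  if ∃ k : ℤ, -γ < t - 2 * Real.pi * k ∧ t - 2 * Real.pi * k < γ then 1 else -1

/-!
On the fundamental domain `[-π, π]` the wave is `1` on `(-γ, γ)` and `-1` elsewhere, so
`∫_{-π}^{π} Π_γ g = 2 ∫_{-γ}^{γ} g - ∫_{-π}^{π} g`. For `g u = cos (α + φ - u)` the last integral
vanishes and `2 ∫_{-γ}^{γ} g = 2 (sin (α + φ + γ) - sin (α + φ - γ)) = 4 sin γ cos (α + φ)`.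
The shift by `φ` and the move of the window `[φ, φ + 2π]` to `[-π, π]` cost nothing by periodicity.
-/

open MeasureTheory Real Set intervalIntegral

theorem rectWave_periodic (γ : ℝ) : Function.Periodic (rectWave γ) (2 * π) := by
  intro t
  unfold rectWave
  congr 1
  refine propext ⟨fun ⟨k, h⟩ => ⟨k - 1, ?_⟩, fun ⟨k, h⟩ => ⟨k + 1, ?_⟩⟩ <;>
    push_cast <;> constructor <;> linarith [h.1, h.2]

theorem rectWave_measurable (γ : ℝ) : Measurable (rectWave γ) := by
  have hset : {t : ℝ | ∃ k : ℤ, -γ < t - 2 * π * k ∧ t - 2 * π * k < γ}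
      = ⋃ k : ℤ, (fun t => t - 2 * π * k) ⁻¹' Ioo (-γ) γ := by
    ext t
    simp only [mem_ofPred_eq, mem_iUnion, mem_preimage, mem_Ioo]
  refine Measurable.ite ?_ measurable_const measurable_const
  rw [hset]
  exact MeasurableSet.iUnion fun k => measurable_id.sub_const _ measurableSet_Ioo

theorem abs_rectWave (γ t : ℝ) : |rectWave γ t| = 1 := by
  unfold rectWave
  split_ifs <;> norm_num

theorem rectWave_of_mem_Icc {γ t : ℝ} (hγ : γ ≤ π) (ht : t ∈ Icc (-π) π) :
    rectWave γ t = if t ∈ Ioo (-γ) γ then 1 else -1 := by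
  unfold rectWave
  congr 1
  refine propext ⟨fun ⟨k, h₁, h₂⟩ => ?_, fun h => ⟨0, by simpa using h⟩⟩
  obtain rfl | hk | hk : k = 0 ∨ 1 ≤ k ∨ k ≤ -1 := by omega
  · rw [Int.cast_zero, mul_zero, sub_zero] at h₁ h₂
    exact ⟨h₁, h₂⟩
  · have : (1 : ℝ) ≤ k := by exact_mod_cast hk
    nlinarith [pi_pos, ht.2]
  · have : (k : ℝ) ≤ -1 := by exact_mod_cast hk
    nlinarith [pi_pos, ht.1]

theorem IntervalIntegrable.rectWave_mul {γ a b : ℝ} {g : ℝ → ℝ}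
    (hg : IntervalIntegrable g volume a b) :
    IntervalIntegrable (fun u => rectWave γ u * g u) volume a b := by
  rw [intervalIntegrable_iff] at hg ⊢
  exact hg.bdd_mul (c := 1) (rectWave_measurable γ).aestronglyMeasurable
    (ae_of_all _ fun t => (abs_rectWave γ t).le)

theorem integral_add_adjacent_intervals_three {E : Type*} [NormedAddCommGroup E] [NormedSpace ℝ E]
    {μ : Measure ℝ} {f : ℝ → E} {a b c d : ℝ} (hab : a ≤ b) (hbc : b ≤ c) (hcd : c ≤ d)
    (hf : IntervalIntegrable f μ a d) :
    ∫ x in a..d, f x ∂μ = (∫ x in a..b, f x ∂μ) + (∫ x in b..c, f x ∂μ) + ∫ x in c..d, f x ∂μ := by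
  have hc : c ∈ uIcc a d := mem_uIcc_of_le (hab.trans hbc) hcd
  have hac := hf.mono_set (uIcc_subset_uIcc_left hc)
  have hb : b ∈ uIcc a c := mem_uIcc_of_le hab hbc
  rw [← integral_add_adjacent_intervals hac (hf.mono_set (uIcc_subset_uIcc_right hc)),
    ← integral_add_adjacent_intervals (hac.mono_set (uIcc_subset_uIcc_left hb))
      (hac.mono_set (uIcc_subset_uIcc_right hb))]

theorem integral_rectWave_mul {γ : ℝ} {g : ℝ → ℝ} (hγ₀ : 0 ≤ γ) (hγ : γ ≤ π)
    (hg : IntervalIntegrable g volume (-π) π) :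
    ∫ u in (-π)..π, rectWave γ u * g u = 2 * (∫ u in (-γ)..γ, g u) - ∫ u in (-π)..π, g u := by
  have hπ := pi_pos
  have split : ∀ h : ℝ → ℝ, IntervalIntegrable h volume (-π) π →
      ∫ u in (-π)..π, h u
        = (∫ u in (-π)..(-γ), h u) + (∫ u in (-γ)..γ, h u) + ∫ u in γ..π, h u :=
    fun _ => integral_add_adjacent_intervals_three (by linarith) (by linarith) hγ
  have outside : ∀ {a b}, -π ≤ a → b ≤ π → a ≤ b → b ≤ -γ ∨ γ ≤ a →
      ∫ u in a..b, rectWave γ u * g u = -∫ u in a..b, g u := by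
    intro a b ha hb hab hout
    rw [← intervalIntegral.integral_neg]
    refine integral_congr_Ioo_of_le hab fun u hu => ?_
    have hu' : u ∉ Ioo (-γ) γ := fun h => by
      rcases hout with h' | h' <;> linarith [hu.1, hu.2, h.1, h.2]
    rw [rectWave_of_mem_Icc hγ ⟨by linarith [hu.1], by linarith [hu.2]⟩, if_neg hu', neg_one_mul]
  have inside : ∫ u in (-γ)..γ, rectWave γ u * g u = ∫ u in (-γ)..γ, g u := by
    refine integral_congr_Ioo_of_le (by linarith) fun u hu => ?_
    rw [rectWave_of_mem_Icc hγ ⟨by linarith [hu.1], by linarith [hu.2]⟩, if_pos hu, one_mul]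
  rw [split _ hg.rectWave_mul, split _ hg, inside,
    outside le_rfl (by linarith) (by linarith) (.inl le_rfl),
    outside (by linarith) le_rfl hγ (.inr le_rfl)]
  ring

theorem integral_cos_const_sub (a b c : ℝ) :
    ∫ x in a..b, cos (c - x) = sin (c - a) - sin (c - b) := by
  rw [integral_comp_sub_left (fun x => cos x) c, integral_cos]

/-- Paper: Appendix C, 'Overlap of the slow control sequence'.
Let `γ ∈ [0, π]` and `α, φ ∈ ℝ`. Then
`(1/(2π)) ∫_0^{2π} Π_γ(s + φ) cos(α − s) ds = (2/π) sin γ cos(α + φ)`. -/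
theorem rectWave_overlap_cos
    (γ α φ : ℝ) (hγ0 : 0 ≤ γ) (hγπ : γ ≤ Real.pi) :
    (1 / (2 * Real.pi)) * ∫ s in (0 : ℝ)..(2 * Real.pi),
        rectWave γ (s + φ) * Real.cos (α - s)
      = (2 / Real.pi) * Real.sin γ * Real.cos (α + φ) := by
  set β := α + φ
  have hf : Function.Periodic (fun u => rectWave γ u * cos (β - u)) (2 * π) :=
    (rectWave_periodic γ).mul (cos_periodic.const_sub β)
  have window : ∫ s in (0 : ℝ)..(2 * π), rectWave γ (s + φ) * cos (α - s)
      = ∫ u in (-π)..π, rectWave γ u * cos (β - u) := calc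
    _ = ∫ s in (0 : ℝ)..(2 * π), rectWave γ (s + φ) * cos (β - (s + φ)) :=
      integral_congr fun s _ => by simp only [β, add_sub_add_right_eq_sub]
    _ = ∫ u in φ..φ + 2 * π, rectWave γ u * cos (β - u) := by
      rw [integral_comp_add_right (fun u => rectWave γ u * cos (β - u)), zero_add, add_comm]
    _ = ∫ u in (-π)..(-π + 2 * π), rectWave γ u * cos (β - u) := hf.intervalIntegral_add_eq φ (-π)
    _ = ∫ u in (-π)..π, rectWave γ u * cos (β - u) := by ring_nf
  rw [window, integral_rectWave_mul hγ0 hγπ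
      ((by fun_prop : Continuous fun u => cos (β - u)).intervalIntegrable _ _),
    integral_cos_const_sub, integral_cos_const_sub]
  simp only [sin_sub, sin_neg, cos_neg, sin_pi, cos_pi]
  field_simp
  ring
end

section
/- Let x_1, …, x_n ∈ ℝ^D be sensor positions, z_1, …, z_n ∈ {−1,1} signs, and C_1, …, C_n : ℝ → ℝ control functions. Suppose there exists an involution σ of {1,…,n} such that for every i: x_{σ(i)} = −x_i, z_{σ(i)} = z_i, and C_{σ(i)} = C_i. Let f : ℝ^D × ℝ → ℝ be any field that is odd in space, i.e., f(−x, t) = −f(x, t) for all x and t. Then for every t, ∑_{i=1}^n z_i · C_i(t) · f(x_i, t) = 0; in particular the coupling g = ∑_i z_i ∫ f(x_i, t) C_i(t) dt vanishes. -/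
/-! Reindexing a sum over the sensors by the point reflection `σ` leaves it unchanged, while
oddness of the field in space flips the sign of every term; a sum equal to its own negative
in a torsion-free group vanishes. -/

theorem Fintype.sum_eq_zero_of_involutive_of_neg {ι M : Type*} [Fintype ι] [AddCommGroup M]
    [IsAddTorsionFree M] {σ : ι → ι} (hσ : Function.Involutive σ) {F : ι → M}
    (hF : ∀ i, F (σ i) = -F i) : ∑ i, F i = 0 := by
  refine self_eq_neg.mp ?_
  calc ∑ i, F i = ∑ i, F (σ i) := (hσ.bijective.sum_comp F).symm
    _ = -∑ i, F i := by simp only [hF, Finset.sum_neg_distrib]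

theorem point_symmetric_sensor_insensitive_to_odd_field_general
    (n D : ℕ) (x : Fin n → (Fin D → ℝ)) (z : Fin n → ℝ)
    (C : Fin n → ℝ → ℝ) (σ : Fin n → Fin n)
    (hinv : ∀ i, σ (σ i) = i)
    (hx : ∀ i, x (σ i) = - x i)
    (hzσ : ∀ i, z (σ i) = z i)
    (hC : ∀ i, C (σ i) = C i)
    (f : (Fin D → ℝ) → ℝ → ℝ)
    (hf : ∀ y t, f (-y) t = - f y t) :
    (∀ t, ∑ i, z i * C i t * f (x i) t = 0)
      ∧ (∀ T₀ T₁ : ℝ, ∑ i, z i * ∫ t in T₀..T₁, f (x i) t * C i t = 0) := by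
  refine ⟨fun t => ?_, fun T₀ T₁ => ?_⟩
  · refine Fintype.sum_eq_zero_of_involutive_of_neg hinv fun i => ?_
    rw [hzσ, hC, hx, hf]
    ring
  · refine Fintype.sum_eq_zero_of_involutive_of_neg hinv fun i => ?_
    simp only [hzσ, hC, hx, hf, neg_mul, intervalIntegral.integral_neg, mul_neg]

/-- Paper: Section 'Point symmetric sensors'.
Let `x₁, …, xₙ ∈ ℝ^D` be sensor positions, `z₁, …, zₙ ∈ {−1,1}` signs and
`C₁, …, Cₙ : ℝ → ℝ` control functions. If there is an involution `σ` of the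
sensors with `x_{σ(i)} = −x_i`, `z_{σ(i)} = z_i`, `C_{σ(i)} = C_i`, then for any
field `f` that is odd in space (`f(−x,t) = −f(x,t)`) the instantaneous coupling
`∑_i z_i C_i(t) f(x_i,t)` vanishes for all `t`; in particular the integrated
coupling `∑_i z_i ∫ f(x_i,t) C_i(t) dt` vanishes. -/
theorem point_symmetric_sensor_insensitive_to_odd_field
    (n D : ℕ) (x : Fin n → (Fin D → ℝ)) (z : Fin n → ℝ)
    (hz : ∀ i, z i = 1 ∨ z i = -1)
    (C : Fin n → ℝ → ℝ) (σ : Fin n → Fin n)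
    (hinv : ∀ i, σ (σ i) = i)
    (hx : ∀ i, x (σ i) = - x i)
    (hzσ : ∀ i, z (σ i) = z i)
    (hC : ∀ i, C (σ i) = C i)
    (f : (Fin D → ℝ) → ℝ → ℝ)
    (hf : ∀ y t, f (-y) t = - f y t) :
    (∀ t, ∑ i, z i * C i t * f (x i) t = 0)
      ∧ (∀ T₀ T₁ : ℝ, ∑ i, z i * ∫ t in T₀..T₁, f (x i) t * C i t = 0) :=
  point_symmetric_sensor_insensitive_to_odd_field_general n D x z C σ hinv hx hzσ hC f hf
end
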